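/- arXiv:2009.09044 — 8 statements merged into one kernel-verified Lean document; each statement's English description precedes it below -/
import Mathlib

section
/- Let p be a prime and let (S, σ, τ) be a frame. Then τ(S₁) is contained in the Jacobson radical of S₀; equivalently, t·s ∈ Rad(S₀) for every s ∈ S₁, where t is the unique element of S₋₁ with τ(t) = 1. -/
/-!
Fix a prime `p`.  A *frame* is a triple `(S, σ, τ)` where `S = ⨁ₙ Sₙ` is a ℤ-graded
commutative ring and `σ, τ : S → S₀` are ring homomorphisms (formalized as ring
endomorphisms of `S` landing in the degree-zero part `𝒜 0`) such that:
(a) `τ` restricted to `S₀` is the identity and `τ` restricted to `S₋ₙ` is a bijection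
    onto `S₀` for every `n ≥ 1`;
(b) writing `t` for the unique element of `S₋₁` with `τ t = 1`, the restriction of `σ`
    to `S₀` induces the `p`-power Frobenius on `S₀/pS₀`, and `σ t = p`;
(c) `p` lies in the Jacobson radical of `S₀` (elementwise: `1 - p·y` is a unit of `S₀`
    for every `y ∈ S₀`).
-/
structure Frame (p : ℕ) {A : Type*} [CommRing A] (𝒜 : ℤ → AddSubgroup A)
    [GradedRing 𝒜] where
  sigma : A →+* A
  tau : A →+* A
  sigma_mem_zero : ∀ a : A, sigma a ∈ 𝒜 0
  tau_mem_zero : ∀ a : A, tau a ∈ 𝒜 0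
  tau_id_zero : ∀ a ∈ 𝒜 0, tau a = a
  tau_inj_neg : ∀ n : ℕ, 1 ≤ n → ∀ a ∈ 𝒜 (-(n : ℤ)), ∀ b ∈ 𝒜 (-(n : ℤ)),
    tau a = tau b → a = b
  tau_surj_neg : ∀ n : ℕ, 1 ≤ n → ∀ c ∈ 𝒜 0, ∃ a ∈ 𝒜 (-(n : ℤ)), tau a = c
  sigma_frob : ∀ a ∈ 𝒜 0, ∃ b ∈ 𝒜 0, sigma a = a ^ p + (p : A) * b
  sigma_t : ∀ t ∈ 𝒜 (-1 : ℤ), tau t = 1 → sigma t = (p : A)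
  p_rad : ∀ y ∈ 𝒜 0, ∃ z ∈ 𝒜 0, (1 - (p : A) * y) * z = 1

/-- If `u ∈ S₀` and `σ u` is invertible in `S₀`, then `u` is invertible in `S₀`. -/
lemma Frame.inv_of_sigma_inv {p : ℕ} (hp : p ≠ 0) {A : Type*} [CommRing A]
    {𝒜 : ℤ → AddSubgroup A} [GradedRing 𝒜] (F : Frame p 𝒜)
    {u : A} (hu : u ∈ 𝒜 0) {z : A} (hz : z ∈ 𝒜 0) (hzu : F.sigma u * z = 1) :
    ∃ w ∈ 𝒜 0, u * w = 1 := by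
  obtain ⟨b, hb, hfrob⟩ := F.sigma_frob u hu
  have hbz : b * z ∈ 𝒜 0 := by simpa using SetLike.mul_mem_graded hb hz
  obtain ⟨w, hw, hww⟩ := F.p_rad (b * z) hbz
  refine ⟨u ^ (p - 1) * z * w, ?_, ?_⟩
  · have h1 : u ^ (p - 1) ∈ 𝒜 0 := by
      simpa using SetLike.pow_mem_graded (p - 1) hu
    simpa using SetLike.mul_mem_graded (SetLike.mul_mem_graded h1 hz) hw
  · have hp0 : u * u ^ (p - 1) = u ^ p := by
      rw [← pow_succ']; congr 1; omega
    calc u * (u ^ (p - 1) * z * w) = u ^ p * z * w := by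
          rw [← mul_assoc, ← mul_assoc, hp0]
    _ = (F.sigma u - (p : A) * b) * z * w := by rw [hfrob]; ring
    _ = (1 - (p : A) * (b * z)) * w := by rw [sub_mul, hzu]; ring_nf
    _ = 1 := hww

/-- For `t ∈ S₋₁` with `τ t = 1` and `s ∈ S₁` one has `τ s = t * s`. -/
lemma Frame.tau_eq_t_mul {p : ℕ} {A : Type*} [CommRing A]
    {𝒜 : ℤ → AddSubgroup A} [GradedRing 𝒜] (F : Frame p 𝒜)
    {t : A} (ht : t ∈ 𝒜 (-1 : ℤ)) (ht1 : F.tau t = 1)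
    {s : A} (hs : s ∈ 𝒜 1) : F.tau s = t * s := by
  have hts : t * s ∈ 𝒜 0 := by simpa using SetLike.mul_mem_graded ht hs
  have := F.tau_id_zero (t * s) hts
  rw [map_mul, ht1, one_mul] at this
  exact this

lemma Frame.key {p : ℕ} (hp : p ≠ 0) {A : Type*} [CommRing A]
    {𝒜 : ℤ → AddSubgroup A} [GradedRing 𝒜] (F : Frame p 𝒜)
    {t : A} (ht : t ∈ 𝒜 (-1 : ℤ)) (ht1 : F.tau t = 1)
    {s : A} (hs : s ∈ 𝒜 1) {y : A} (hy : y ∈ 𝒜 0) :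
    ∃ z ∈ 𝒜 0, (1 - t * s * y) * z = 1 := by
  have hts : t * s ∈ 𝒜 0 := by simpa using SetLike.mul_mem_graded ht hs
  have hu : (1 : A) - t * s * y ∈ 𝒜 0 := by
    exact AddSubgroup.sub_mem _ (SetLike.one_mem_graded 𝒜)
      (by simpa using SetLike.mul_mem_graded hts hy)
  have hsy : F.sigma s * F.sigma y ∈ 𝒜 0 := by
    simpa using SetLike.mul_mem_graded (F.sigma_mem_zero s) (F.sigma_mem_zero y)
  obtain ⟨z, hz, hzz⟩ := F.p_rad _ hsy
  have hsigma : F.sigma (1 - t * s * y) = 1 - (p : A) * (F.sigma s * F.sigma y) := by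
    rw [map_sub, map_one, map_mul, map_mul, F.sigma_t t ht ht1]; ring
  exact F.inv_of_sigma_inv hp hu hz (by rw [hsigma]; exact hzz)

/-- Let `p` be a prime and `(S, σ, τ)` a frame.  Then `τ(S₁)` is
contained in the Jacobson radical of `S₀` (elementwise: `1 - τ(s)·y` is invertible in
`S₀` for all `s ∈ S₁`, `y ∈ S₀`); equivalently, `t·s ∈ Rad S₀` for every `s ∈ S₁`,
where `t` is the unique element of `S₋₁` with `τ t = 1`. -/

theorem frame_tau_S1_mem_jacobson {p : ℕ} (hp : p.Prime)
    {A : Type*} [CommRing A] (𝒜 : ℤ → AddSubgroup A) [GradedRing 𝒜]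
    (F : Frame p 𝒜) :
    (∀ s ∈ 𝒜 1, ∀ y ∈ 𝒜 0, ∃ z ∈ 𝒜 0, (1 - F.tau s * y) * z = 1) ∧
    (∀ t ∈ 𝒜 (-1 : ℤ), F.tau t = 1 →
      ∀ s ∈ 𝒜 1, ∀ y ∈ 𝒜 0, ∃ z ∈ 𝒜 0, (1 - t * s * y) * z = 1) := by
  constructor
  · intro s hs y hy
    obtain ⟨t, ht, ht1⟩ := F.tau_surj_neg 1 le_rfl 1 (SetLike.one_mem_graded 𝒜) 
    rw [show (-(1:ℕ) : ℤ) = (-1 : ℤ) by norm_num] at ht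
    rw [F.tau_eq_t_mul ht ht1 hs]
    exact F.key hp.ne_zero ht ht1 hs hy
  · intro t ht ht1 s hs y hy
    exact F.key hp.ne_zero ht ht1 hs hy
end

section
/- Let p be a prime. Let S' = ⊕_{n∈ℤ} S'ₙ be a ℤ-graded commutative ring and τ' : S' → S'₀ a ring homomorphism such that τ' restricted to S'₀ is the identity and τ' restricted to S'₋ₙ is a bijection onto S'₀ for all n ≥ 1. Suppose there exist a frame (S, σ, τ) and a surjective homomorphism of graded rings φ : S → S' such that τ' ∘ φ = φ ∘ τ (as maps S → S'₀). Then τ'(S'₁) is contained in the Jacobson radical of S'₀; that is, (S', τ') is a semi-frame. -/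
/-- Let `p` be a prime.  Let `S' = ⨁ₙ S'ₙ` be a ℤ-graded commutative
ring and `τ' : S' → S'₀` a ring homomorphism restricting to the identity on `S'₀` and
to a bijection `S'₋ₙ → S'₀` for all `n ≥ 1`.  If there are a frame `(S, σ, τ)` and a
surjective homomorphism of graded rings `φ : S → S'` with `τ' ∘ φ = φ ∘ τ`, then
`τ'(S'₁)` is contained in the Jacobson radical of `S'₀` (elementwise: `1 - τ'(s)·y` is
invertible in `S'₀`); that is, `(S', τ')` is a semi-frame. -/
theorem semiFrame_of_surjective_of_frame {p : ℕ} (hp : p.Prime)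
    {A A' : Type*} [CommRing A] [CommRing A']
    (𝒜 : ℤ → AddSubgroup A) [GradedRing 𝒜]
    (𝒜' : ℤ → AddSubgroup A') [GradedRing 𝒜']
    (τ' : A' →+* A')
    (hτ'mem : ∀ a : A', τ' a ∈ 𝒜' 0)
    (hτ'id : ∀ a ∈ 𝒜' 0, τ' a = a)
    (hτ'inj : ∀ n : ℕ, 1 ≤ n → ∀ a ∈ 𝒜' (-(n : ℤ)), ∀ b ∈ 𝒜' (-(n : ℤ)),
      τ' a = τ' b → a = b)
    (hτ'surj : ∀ n : ℕ, 1 ≤ n → ∀ c ∈ 𝒜' 0, ∃ a ∈ 𝒜' (-(n : ℤ)), τ' a = c)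
    (F : Frame p 𝒜) (φ : A →+* A')
    (hφgraded : ∀ n : ℤ, ∀ a ∈ 𝒜 n, φ a ∈ 𝒜' n)
    (hφsurj : Function.Surjective φ)
    (hcomm : ∀ a : A, τ' (φ a) = φ (F.tau a)) :
    ∀ s ∈ 𝒜' 1, ∀ y ∈ 𝒜' 0, ∃ z ∈ 𝒜' 0, (1 - τ' s * y) * z = 1 := by
  -- First: φ is surjective on each graded piece.
  classical
  have key : ∀ (n : ℤ) (s : A'), s ∈ 𝒜' n → ∃ x ∈ 𝒜 n, φ x = s := by
    intro n s hs
    obtain ⟨a, rfl⟩ := hφsurj s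
    refine ⟨DirectSum.decompose 𝒜 a n, SetLike.coe_mem _, ?_⟩
    have h1 : (DirectSum.decompose 𝒜' (φ a) n : A') = φ a :=
      DirectSum.decompose_of_mem_same 𝒜' hs
    have h2 : (DirectSum.decompose 𝒜' (φ a) n : A')
        = φ (DirectSum.decompose 𝒜 a n) := by
      conv_lhs => rw [← DirectSum.sum_support_decompose 𝒜 a]
      rw [map_sum, DirectSum.decompose_sum, DFinsupp.finset_sum_apply,
        AddSubmonoidClass.coe_finset_sum]
      rw [Finset.sum_eq_single n]
      · by_cases hn : n ∈ DFinsupp.support (DirectSum.decompose 𝒜 a)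
        · exact DirectSum.decompose_of_mem_same 𝒜'
            (hφgraded n _ (SetLike.coe_mem _))
        · rw [DFinsupp.notMem_support_iff.mp hn]
          simp
      · intro i _ hin
        exact DirectSum.decompose_of_mem_ne 𝒜'
          (hφgraded i _ (SetLike.coe_mem _)) hin
      · intro hn
        rw [DFinsupp.notMem_support_iff.mp hn]
        simp
    rw [← h2, h1]
  intro s hs y hy
  obtain ⟨x, hx, rfl⟩ := key 1 s hs
  obtain ⟨u, hu, rfl⟩ := key 0 y hy
  have hone : (1 : A) ∈ 𝒜 0 := SetLike.GradedOne.one_mem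
  obtain ⟨t, ht, htau⟩ := F.tau_surj_neg 1 le_rfl 1 hone
  have ht' : t ∈ 𝒜 (-1 : ℤ) := by simpa using ht
  have htx0 : t * x ∈ 𝒜 0 := by
    have := SetLike.mul_mem_graded ht' hx
    simpa using this
  have hτx : F.tau x = t * x := by
    have h := F.tau_id_zero _ htx0
    rw [map_mul, htau, one_mul] at h
    exact h
  have hσ : F.sigma (t * x) = (p : A) * F.sigma x := by
    rw [map_mul, F.sigma_t t ht' htau]
  obtain ⟨b, hb, hfrob⟩ := F.sigma_frob (t * x) htx0
  have hpow : (t * x) ^ p = (p : A) * (F.sigma x - b) := by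
    rw [hσ] at hfrob
    linear_combination -hfrob
  -- powers of elements of 𝒜 0 stay in 𝒜 0
  have hpowmem : ∀ (a : A), a ∈ 𝒜 0 → ∀ k : ℕ, a ^ k ∈ 𝒜 0 := by
    intro a ha k
    induction k with
    | zero => simpa using hone
    | succ k ih =>
      have := SetLike.mul_mem_graded ih ha
      simpa [pow_succ] using this
  have hmul0 : ∀ a ∈ 𝒜 0, ∀ b' ∈ 𝒜 0, a * b' ∈ 𝒜 0 := by
    intro a ha b' hb'
    have := SetLike.mul_mem_graded ha hb'
    simpa using this
  set r : A := F.tau x * u with hr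
  have hrmem : r ∈ 𝒜 0 := hmul0 _ (F.tau_mem_zero x) _ hu
  have hc : (F.sigma x - b) * u ^ p ∈ 𝒜 0 :=
    hmul0 _ (sub_mem (F.sigma_mem_zero x) hb) _ (hpowmem u hu p)
  obtain ⟨z, hz, hzeq⟩ := F.p_rad _ hc
  have hrp : r ^ p = (p : A) * ((F.sigma x - b) * u ^ p) := by
    rw [hr, hτx, mul_pow, hpow]
    ring
  -- geometric series inverse
  have hgeom : (1 - r) * ((∑ i ∈ Finset.range p, r ^ i) * z) = 1 := by
    have hg := geom_sum_mul r p
    calc (1 - r) * ((∑ i ∈ Finset.range p, r ^ i) * z)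
        = (1 - r ^ p) * z := by linear_combination -z * hg
      _ = 1 := by rw [hrp]; exact hzeq
  set w : A := (∑ i ∈ Finset.range p, r ^ i) * z with hw
  have hwmem : w ∈ 𝒜 0 := by
    refine hmul0 _ ?_ _ hz
    exact AddSubgroup.sum_mem _ (fun i _ => hpowmem r hrmem i)
  refine ⟨φ w, hφgraded 0 w hwmem, ?_⟩
  have e1 : τ' (φ x) * φ u = φ r := by rw [hcomm, hr, map_mul]
  calc (1 - τ' (φ x) * φ u) * φ w = φ ((1 - r) * w) := by
        simp only [map_mul, map_sub, map_one, e1]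
    _ = 1 := by rw [hgeom, map_one]
end

section
/- Let (S, τ) be a semi-frame for a ring R and let M be a finitely generated graded S-module. If the base change M ⊗_{S,ν} R vanishes, then M = 0. -/
/-- A *semi-frame* `(S, τ)`: `S = ⨁ₙ Sₙ` a ℤ-graded commutative ring together with a
ring homomorphism `τ : S → S₀` (formalized as a ring endomorphism of `S` landing in
`𝒜 0`) such that `τ` restricted to `S₀` is the identity, `τ` restricted to `S₋ₙ` is a
bijection onto `S₀` for every `n ≥ 1`, and `τ(S₁)` is contained in the Jacobson
radical of `S₀` (elementwise: `1 - τ(s)·y` is invertible in `S₀`). -/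
structure SemiFrame {A : Type*} [CommRing A] (𝒜 : ℤ → AddSubgroup A)
    [GradedRing 𝒜] where
  tau : A →+* A
  tau_mem_zero : ∀ a : A, tau a ∈ 𝒜 0
  tau_id_zero : ∀ a ∈ 𝒜 0, tau a = a
  tau_inj_neg : ∀ n : ℕ, 1 ≤ n → ∀ a ∈ 𝒜 (-(n : ℤ)), ∀ b ∈ 𝒜 (-(n : ℤ)),
    tau a = tau b → a = b
  tau_surj_neg : ∀ n : ℕ, 1 ≤ n → ∀ c ∈ 𝒜 0, ∃ a ∈ 𝒜 (-(n : ℤ)), tau a = c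
  tau_S1_rad : ∀ s ∈ 𝒜 1, ∀ y ∈ 𝒜 0, ∃ z ∈ 𝒜 0, (1 - tau s * y) * z = 1

/-- The kernel of the ring homomorphism `ν : S → R = S₀/τ(S₁)` which is the canonical
projection `S₀ → R` in degree `0` and zero in all other degrees: it is the ideal of
`S` generated by all homogeneous elements of nonzero degree together with `τ(S₁)`.
The base change `M ⊗_{S,ν} R` of an `S`-module `M` is then `M ⊗_S (S / ker ν)`. -/
def kerNu {A : Type*} [CommRing A] (𝒜 : ℤ → AddSubgroup A) [GradedRing 𝒜]
    (τ : A →+* A) : Ideal A :=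
  Ideal.span ((⋃ (n : ℤ) (_ : n ≠ 0), (𝒜 n : Set A)) ∪ (τ '' (𝒜 1 : Set A)))

section Aux

variable {A : Type*} [CommRing A] (𝒜 : ℤ → AddSubgroup A) [GradedRing 𝒜]

/-- `w` is in the "Jacobson radical of `S₀`" in the elementwise sense. -/
def SFRad (w : A) : Prop := ∀ y ∈ 𝒜 0, ∃ z ∈ 𝒜 0, (1 - w * y) * z = 1

lemma mem_zero_mul {c y : A} (hc : c ∈ 𝒜 0) (hy : y ∈ 𝒜 0) : c * y ∈ 𝒜 0 := by
  have := SetLike.mul_mem_graded hc hy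
  rwa [add_zero] at this

lemma sfrad_zero : SFRad 𝒜 0 := by
  intro y hy
  exact ⟨1, SetLike.one_mem_graded 𝒜, by ring⟩

lemma sfrad_add {a b : A} (ha : SFRad 𝒜 a) (hb : SFRad 𝒜 b) : SFRad 𝒜 (a + b) := by
  intro y hy
  obtain ⟨z₁, hz₁, h₁⟩ := ha y hy
  obtain ⟨z₂, hz₂, h₂⟩ := hb (y * z₁) (mem_zero_mul 𝒜 hy hz₁)
  exact ⟨z₁ * z₂, mem_zero_mul 𝒜 hz₁ hz₂, by linear_combination z₂ * h₁ + h₂⟩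

lemma sfrad_mul {w : A} (hw : SFRad 𝒜 w) {c : A} (hc : c ∈ 𝒜 0) : SFRad 𝒜 (w * c) := by
  intro y hy
  obtain ⟨z, hz, h⟩ := hw (c * y) (mem_zero_mul 𝒜 hc hy)
  exact ⟨z, hz, by linear_combination h⟩

lemma sfrad_tau_pos (SF : SemiFrame 𝒜) (n : ℕ) (hn : 1 ≤ n) {g : A} (hg : g ∈ 𝒜 (n : ℤ)) :
    SFRad 𝒜 (SF.tau g) := by
  obtain ⟨e, he, hτe⟩ : ∃ e ∈ 𝒜 (1 - (n : ℤ)), SF.tau e = 1 := by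
    rcases Nat.exists_eq_add_of_le hn with ⟨m, rfl⟩
    rcases Nat.eq_zero_or_pos m with hm | hm
    · subst hm
      exact ⟨1, by norm_num [SetLike.one_mem_graded], map_one _⟩
    · obtain ⟨e, he, hτ⟩ := SF.tau_surj_neg m hm 1 (SetLike.one_mem_graded 𝒜)
      refine ⟨e, ?_, hτ⟩
      have : (1 - ((1 + m : ℕ) : ℤ)) = -(m : ℤ) := by push_cast; ring
      rw [this]; exact he
  have hs : g * e ∈ 𝒜 1 := by
    have := SetLike.mul_mem_graded hg he
    rwa [show (n : ℤ) + (1 - (n : ℤ)) = 1 by ring] at this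
  have hτs : SF.tau (g * e) = SF.tau g := by rw [map_mul, hτe, mul_one]
  intro y hy
  obtain ⟨z, hz, h⟩ := SF.tau_S1_rad (g * e) hs y hy
  rw [hτs] at h
  exact ⟨z, hz, h⟩

lemma sfrad_prod (SF : SemiFrame 𝒜) (k : ℕ) (hk : 1 ≤ k) {x y : A} (hx : x ∈ 𝒜 (k : ℤ))
    (hy : y ∈ 𝒜 (-(k : ℤ))) : SFRad 𝒜 (x * y) := by
  have hxy0 : x * y ∈ 𝒜 0 := by
    have := SetLike.mul_mem_graded hx hy
    rwa [add_neg_cancel] at this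
  have heq : x * y = SF.tau x * SF.tau y := by
    rw [← map_mul]
    exact (SF.tau_id_zero _ hxy0).symm
  rw [heq]
  exact sfrad_mul 𝒜 (sfrad_tau_pos 𝒜 SF k hk hx) (SF.tau_mem_zero y)

lemma sfrad_proj_kerNu (SF : SemiFrame 𝒜) {x : A} (hx : x ∈ kerNu 𝒜 SF.tau) :
    ∀ a : A, SFRad 𝒜 (DirectSum.decompose 𝒜 (a * x) 0 : A) := by
  refine Submodule.span_induction
    (p := fun x _ => ∀ a : A, SFRad 𝒜 (DirectSum.decompose 𝒜 (a * x) 0 : A))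
    ?_ ?_ ?_ ?_ hx
  · rintro g hg a
    rcases hg with hg | ⟨s, hs, rfl⟩
    · simp only [Set.mem_iUnion, SetLike.mem_coe] at hg
      obtain ⟨n, hn0, hgn⟩ := hg
      have hd : (DirectSum.decompose 𝒜 (a * g) 0 : A)
          = (DirectSum.decompose 𝒜 a (-n) : A) * g := by
        have h := DirectSum.coe_decompose_mul_add_of_right_mem 𝒜 (a := a) (i := -n) hgn
        rwa [neg_add_cancel] at h
      rw [hd]
      rcases lt_or_gt_of_ne hn0 with hneg | hpos
      · -- n < 0 : the degree `-n` factor is positive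
        set k : ℕ := (-n).toNat with hkdef
        have hkz : ((k : ℤ)) = -n := Int.toNat_of_nonneg (by omega)
        have hk1 : 1 ≤ k := by omega
        have hxmem : (DirectSum.decompose 𝒜 a (-n) : A) ∈ 𝒜 (k : ℤ) := by
          rw [hkz]; exact SetLike.coe_mem _
        have hymem : g ∈ 𝒜 (-(k : ℤ)) := by rw [hkz]; simpa using hgn
        exact sfrad_prod 𝒜 SF k hk1 hxmem hymem
      · -- n > 0 : g has positive degree
        set k : ℕ := n.toNat with hkdef
        have hkz : ((k : ℤ)) = n := Int.toNat_of_nonneg (by omega)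
        have hk1 : 1 ≤ k := by omega
        have hxmem : g ∈ 𝒜 (k : ℤ) := by rw [hkz]; exact hgn
        have hymem : (DirectSum.decompose 𝒜 a (-n) : A) ∈ 𝒜 (-(k : ℤ)) := by
          rw [hkz]; exact SetLike.coe_mem _
        rw [mul_comm]
        exact sfrad_prod 𝒜 SF k hk1 hxmem hymem
    · have hg0 : SF.tau s ∈ 𝒜 0 := SF.tau_mem_zero s
      have hd : (DirectSum.decompose 𝒜 (a * SF.tau s) 0 : A)
          = (DirectSum.decompose 𝒜 a 0 : A) * SF.tau s := by
        have h := DirectSum.coe_decompose_mul_add_of_right_mem 𝒜 (a := a) (i := 0) (j := 0) hg0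
        rwa [add_zero] at h
      rw [hd, mul_comm]
      have hτ : SFRad 𝒜 (SF.tau s) := by
        intro y hy
        obtain ⟨z, hz, h⟩ := SF.tau_S1_rad s hs y hy
        exact ⟨z, hz, h⟩
      exact sfrad_mul 𝒜 hτ (SetLike.coe_mem _)
  · intro a
    rw [mul_zero]
    simpa using sfrad_zero 𝒜
  · intro p q hp hq hhp hhq a
    have : (DirectSum.decompose 𝒜 (a * (p + q)) 0 : A)
        = (DirectSum.decompose 𝒜 (a * p) 0 : A) + (DirectSum.decompose 𝒜 (a * q) 0 : A) := by
      rw [mul_add, DirectSum.decompose_add]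
      simp
    rw [this]
    exact sfrad_add 𝒜 (hhp a) (hhq a)
  · intro c p hp hhp a
    rw [smul_eq_mul, ← mul_assoc]
    exact hhp (a * c)

end Aux

set_option synthInstance.maxHeartbeats 1000000 in
set_option maxHeartbeats 2000000 in
open TensorProduct in
/-- Let `(S, τ)` be a semi-frame for the ring `R = S₀/τ(S₁)` and let
`M` be a finitely generated graded `S`-module.  If the base change `M ⊗_{S,ν} R`
vanishes, then `M = 0`. -/
theorem gradedModule_eq_zero_of_baseChange_eq_zero
    {A : Type*} [CommRing A] (𝒜 : ℤ → AddSubgroup A) [GradedRing 𝒜]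
    (SF : SemiFrame 𝒜)
    {M : Type*} [AddCommGroup M] [Module A M]
    (ℳ : ℤ → AddSubgroup M)
    (hinternal : DirectSum.IsInternal ℳ)
    (hgradedSMul : ∀ (i j : ℤ), ∀ a ∈ 𝒜 i, ∀ x ∈ ℳ j, a • x ∈ ℳ (i + j))
    [Module.Finite A M]
    (hvanish : Subsingleton (M ⊗[A] (A ⧸ kerNu 𝒜 SF.tau))) :
    Subsingleton M := by
  classical
  set I := kerNu 𝒜 SF.tau with hIdef
  have hsub : Subsingleton (M ⧸ (I • (⊤ : Submodule A M))) :=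
    (TensorProduct.tensorQuotEquivQuotSMul M I).symm.toEquiv.subsingleton
  have hle : (⊤ : Submodule A M) ≤ I • ⊤ := by
    intro m _
    have h : (Submodule.Quotient.mk m : M ⧸ I • (⊤ : Submodule A M)) = Submodule.Quotient.mk 0 :=
      Subsingleton.elim _ _
    simpa using (Submodule.Quotient.eq _).mp h
  obtain ⟨r, hrI, hr⟩ :=
    Submodule.exists_sub_one_mem_and_smul_eq_zero_of_fg_of_le_smul I ⊤ Module.Finite.fg_top hle
  set x : A := 1 - r with hxdef
  have hxI : x ∈ I := by
    have := I.neg_mem hrI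
    simpa [hxdef, neg_sub] using this
  set x₀ : A := (DirectSum.decompose 𝒜 x 0 : A) with hx₀def
  have hrad : SFRad 𝒜 x₀ := by
    have h := sfrad_proj_kerNu 𝒜 SF hxI 1
    rw [one_mul] at h
    exact h
  obtain ⟨z, hz, hz1⟩ := hrad 1 (SetLike.one_mem_graded 𝒜)
  rw [mul_one] at hz1
  have hhom : ∀ (d : ℤ), ∀ m ∈ ℳ d, m = 0 := by
    intro d m hm
    have hrm : r • m = 0 := hr m trivial
    have hmx : x • m = m - r • m := by rw [hxdef, sub_smul, one_smul]
    rw [hrm, sub_zero] at hmx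
    set v := DirectSum.decompose 𝒜 x with hv
    have hsum : (∑ n ∈ DFinsupp.support v, ((v n : A) • m)) = m := by
      rw [← Finset.sum_smul]
      rw [show (∑ n ∈ DFinsupp.support v, (v n : A)) = x from DirectSum.sum_support_decompose 𝒜 x]
      exact hmx
    set w : DirectSum ℤ (fun i => ℳ i) := ∑ n ∈ DFinsupp.support v,
      DirectSum.of (fun i => ℳ i) (n + d)
        ⟨(v n : A) • m, hgradedSMul n d (v n) (SetLike.coe_mem _) m hm⟩ with hw
    have hcoe : DirectSum.coeAddMonoidHom ℳ w
        = DirectSum.coeAddMonoidHom ℳ (DirectSum.of (fun i => ℳ i) d ⟨m, hm⟩) := by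
      rw [hw, map_sum]
      simp only [DirectSum.coeAddMonoidHom_of]
      rw [hsum]
    have hweq : w = DirectSum.of (fun i => ℳ i) d ⟨m, hm⟩ := hinternal.1 hcoe
    have happ : ((w d : ℳ d) : M) = m := by
      rw [hweq, DirectSum.of_eq_same]
    have hcomp : ((w d : ℳ d) : M) = x₀ • m := by
      rw [hw, DFinsupp.finset_sum_apply]
      rw [AddSubmonoidClass.coe_finset_sum]
      have hterm : ∀ n ∈ DFinsupp.support v,
          ((DirectSum.of (fun i => ℳ i) (n + d)
            ⟨(v n : A) • m, hgradedSMul n d (v n) (SetLike.coe_mem _) m hm⟩ d : ℳ d) : M)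
          = if n = 0 then (v n : A) • m else 0 := by
        intro n _
        rw [DirectSum.coe_of_apply]
        by_cases hn : n = 0
        · subst hn
          simp
        · rw [if_neg (by omega), if_neg hn]
          exact ZeroMemClass.coe_zero _
      rw [Finset.sum_congr rfl hterm]
      rw [Finset.sum_ite_eq' (DFinsupp.support v) 0 (fun n => (v n : A) • m)]
      by_cases h0 : (0 : ℤ) ∈ DFinsupp.support v
      · rw [if_pos h0]
      · rw [if_neg h0]
        have : v 0 = 0 := DFinsupp.notMem_support_iff.mp h0
        rw [hx₀def, hv, this]
        simp
    have hx₀m : x₀ • m = m := by rw [← hcomp, happ]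
    have hzero : (1 - x₀) • m = 0 := by
      rw [sub_smul, one_smul, hx₀m, sub_self]
    calc m = ((1 - x₀) * z) • m := by rw [hz1, one_smul]
      _ = z • ((1 - x₀) • m) := by rw [mul_comm, mul_smul]
      _ = 0 := by rw [hzero, smul_zero]
  refine subsingleton_of_forall_eq 0 ?_
  intro m
  obtain ⟨val, hval⟩ := hinternal.2 m
  have hall : ∀ v : DirectSum ℤ (fun i => ℳ i), DirectSum.coeAddMonoidHom ℳ v = 0 := by
    intro v
    refine DirectSum.induction_on v ?_ ?_ ?_
    · simp
    · intro i xi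
      rw [DirectSum.coeAddMonoidHom_of]
      exact hhom i xi xi.2
    · intro a b ha hb
      rw [map_add, ha, hb, add_zero]
  rw [← hval, hall val]
end

section
/- Let (S, τ) be a semi-frame for a ring R, let M be a finitely generated graded S-module that is projective as an S-module, and let N be a finitely generated graded S-module. A homomorphism f : N → M of graded S-modules is bijective if and only if its reduction f̄ : N ⊗_{S,ν} R → M ⊗_{S,ν} R is bijective. -/
/-!
Choose `a ∈ S₋₁` with `τ a = 1`. Then `a * s = τ s` for `s ∈ S₁`, and every homogeneous element
of negative degree is a multiple of `a`, so `ker ν ⊆ (a) + S₊`, where `S₊` is generated by the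
elements of positive degree. This yields a graded Nakayama lemma for `ker ν`: if `V` is finitely
generated and graded, `W` graded and `V ⊆ W + (ker ν) V`, then `V ⊆ W`. Low-degree components of
`V` lie in `a V` (the generators have bounded-below degrees), so induction on the degree gives
`V ⊆ W + a V`; the determinant trick gives `r ≡ 1 mod a` with `r V ⊆ W`, and the degree-`0` part
of `r` is `1 + τ s` with `s ∈ S₁`, a unit by the radical condition.

If `f̄` is bijective, Nakayama with `V = M`, `W = f N` makes `f` surjective; as `M` is projective
`f` splits, so `ker f` is a finitely generated graded direct summand of `N` with
`ker f = (ker ν) (ker f)`, hence zero.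
-/

open DirectSum

section GradedModule

variable {A M N : Type*} [CommRing A] [AddCommGroup M] [Module A M] [AddCommGroup N] [Module A N]
  {𝒜 : ℤ → AddSubgroup A} {ℳ : ℤ → AddSubgroup M} {𝒩 : ℤ → AddSubgroup N}
  [Decomposition ℳ] [Decomposition 𝒩]

theorem coe_decompose_add_apply (x y : M) (n : ℤ) :
    (decompose ℳ (x + y) n : M) = decompose ℳ x n + decompose ℳ y n := by
  rw [decompose_add, DirectSum.add_apply, AddMemClass.coe_add]

theorem coe_decompose_map_of_map_mem {f : N →ₗ[A] M} (hf : ∀ n, ∀ x ∈ 𝒩 n, f x ∈ ℳ n)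
    (x : N) (n : ℤ) : (decompose ℳ (f x) n : M) = f (decompose 𝒩 x n) := by
  induction x using Decomposition.inductionOn 𝒩 with
  | zero => simp
  | @homogeneous j y =>
    by_cases h : n = j
    · rw [h, decompose_of_mem_same ℳ (hf j y y.2), decompose_of_mem_same 𝒩 y.2]
    · rw [decompose_of_mem_ne ℳ (hf j y y.2) (Ne.symm h), decompose_of_mem_ne 𝒩 y.2 (Ne.symm h),
        map_zero]
  | add x y hx hy =>
    rw [map_add, coe_decompose_add_apply, hx, hy, coe_decompose_add_apply, map_add]

theorem LinearMap.isHomogeneous_ker_of_map_mem {f : N →ₗ[A] M}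
    (hf : ∀ n, ∀ x ∈ 𝒩 n, f x ∈ ℳ n) : (LinearMap.ker f).IsHomogeneous 𝒩 := fun n x hx => by
  rw [LinearMap.mem_ker, ← coe_decompose_map_of_map_mem hf, LinearMap.mem_ker.mp hx,
    decompose_zero, DirectSum.zero_apply, ZeroMemClass.coe_zero]

theorem LinearMap.isHomogeneous_range_of_map_mem {f : N →ₗ[A] M}
    (hf : ∀ n, ∀ x ∈ 𝒩 n, f x ∈ ℳ n) : (LinearMap.range f).IsHomogeneous ℳ := by
  rintro n _ ⟨x, rfl⟩
  exact ⟨_, (coe_decompose_map_of_map_mem hf x n).symm⟩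

theorem Submodule.IsHomogeneous.le_of_forall_mem {V W : Submodule A M}
    (hV : V.IsHomogeneous ℳ) (h : ∀ n, ∀ v ∈ V, v ∈ ℳ n → v ∈ W) : V ≤ W := by
  classical
  intro x hx
  rw [← sum_support_decompose ℳ x]
  exact W.sum_mem fun n _ => h n _ (hV n hx) (SetLike.coe_mem _)

theorem Submodule.IsHomogeneous.sup {V W : Submodule A M} (hV : V.IsHomogeneous ℳ)
    (hW : W.IsHomogeneous ℳ) : (V ⊔ W).IsHomogeneous ℳ := by
  intro n x hx
  obtain ⟨v, hv, w, hw, rfl⟩ := Submodule.mem_sup.mp hx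
  rw [coe_decompose_add_apply]
  exact Submodule.add_mem_sup (hV n hv) (hW n hw)

variable [SetLike.GradedSMul 𝒜 ℳ]

theorem coe_decompose_smul_of_left_mem {i : ℤ} {a : A} (ha : a ∈ 𝒜 i) (x : M) (n : ℤ) :
    (decompose ℳ (a • x) n : M) = a • (decompose ℳ x (n - i) : M) := by
  induction x using Decomposition.inductionOn ℳ with
  | zero => simp
  | @homogeneous j y =>
    have hay : a • (y : M) ∈ ℳ (i + j) := SetLike.GradedSMul.smul_mem ha y.2
    by_cases h : n = i + j
    · rw [h, decompose_of_mem_same ℳ hay, add_sub_cancel_left, decompose_of_mem_same ℳ y.2]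
    · rw [decompose_of_mem_ne ℳ hay (Ne.symm h), decompose_of_mem_ne ℳ y.2 (by omega),
        smul_zero]
  | add x y hx hy =>
    rw [smul_add, coe_decompose_add_apply, hx, hy, coe_decompose_add_apply, smul_add]

variable (𝒜) in
def posIdeal : Ideal A := Ideal.span (⋃ (i : ℤ) (_ : 0 < i), (𝒜 i : Set A))

theorem coe_decompose_mem_of_mem_posIdeal_smul {V W : Submodule A M} (hV : V.IsHomogeneous ℳ)
    {n : ℤ} (hlt : ∀ m < n, ∀ v ∈ V, v ∈ ℳ m → v ∈ W) {x : M} (hx : x ∈ posIdeal 𝒜 • V) :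
    (decompose ℳ x n : M) ∈ W := by
  refine Submodule.smul_induction_on hx (fun c hc v hv => ?_) (fun x y hx hy => ?_)
  · induction hc using Submodule.span_induction generalizing v with
    | mem s hs =>
      obtain ⟨i, hi, hs⟩ := Set.mem_iUnion₂.mp hs
      rw [coe_decompose_smul_of_left_mem hs]
      exact W.smul_mem s (hlt (n - i) (by omega) _ (hV _ hv) (SetLike.coe_mem _))
    | zero => simp
    | add c d _ _ hc hd =>
      rw [add_smul, coe_decompose_add_apply]
      exact W.add_mem (hc v hv) (hd v hv)
    | smul t c _ hc =>
      rw [smul_eq_mul, mul_comm, mul_smul]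
      exact hc _ (V.smul_mem t hv)
  · rw [coe_decompose_add_apply]
    exact W.add_mem hx hy

theorem Submodule.IsHomogeneous.le_of_le_sup_posIdeal_smul {V W : Submodule A M}
    (hV : V.IsHomogeneous ℳ) (hW : W.IsHomogeneous ℳ) {n₀ : ℤ}
    (hlow : ∀ n < n₀, ∀ v ∈ V, v ∈ ℳ n → v ∈ W) (hle : V ≤ W ⊔ posIdeal 𝒜 • V) : V ≤ W := by
  have key : ∀ n ≥ n₀, ∀ m < n, ∀ v ∈ V, v ∈ ℳ m → v ∈ W := by
    intro n hn
    induction n, hn using Int.leInduction with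
    | base => exact hlow
    | succ n _ ih =>
      intro m hm v hv hvm
      rcases (Int.lt_add_one_iff.mp hm).lt_or_eq with hm | rfl
      · exact ih m hm v hv hvm
      obtain ⟨w, hw, q, hq, rfl⟩ := Submodule.mem_sup.mp (hle hv)
      rw [← decompose_of_mem_same ℳ hvm, coe_decompose_add_apply]
      exact W.add_mem (hW m hw) (coe_decompose_mem_of_mem_posIdeal_smul hV ih hq)
  exact hV.le_of_forall_mem fun n v hv hvn =>
    key (max n₀ (n + 1)) (le_max_left _ _) n (by omega) v hv hvn

variable [GradedRing 𝒜]

theorem coe_decompose_smul [∀ (i) (x : 𝒜 i), Decidable (x ≠ 0)] (a : A) (x : M) (n : ℤ) :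
    (decompose ℳ (a • x) n : M) =
      ∑ i ∈ (decompose 𝒜 a).support, (decompose 𝒜 a i : A) • (decompose ℳ x (n - i) : M) := by
  conv_lhs => rw [← sum_support_decompose 𝒜 a]
  rw [Finset.sum_smul, decompose_sum, DFinsupp.finsetSum_apply, AddSubgroup.val_finsetSum]
  exact Finset.sum_congr rfl fun i _ => coe_decompose_smul_of_left_mem (SetLike.coe_mem _) x n

theorem coe_decompose_smul_of_right_mem {n : ℤ} {x : M} (hx : x ∈ ℳ n) (a : A) :
    (decompose ℳ (a • x) n : M) = (decompose 𝒜 a 0 : A) • x := by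
  induction a using Decomposition.inductionOn 𝒜 with
  | zero => simp
  | @homogeneous i b =>
    rw [coe_decompose_smul_of_left_mem b.2, decompose_coe]
    by_cases h : i = 0
    · subst h
      rw [sub_zero, decompose_of_mem_same ℳ hx, of_eq_same]
    · rw [decompose_of_mem_ne ℳ hx (by omega), of_eq_of_ne _ _ _ (Ne.symm h), smul_zero,
        ZeroMemClass.coe_zero, zero_smul]
  | add a b ha hb =>
    rw [add_smul, coe_decompose_add_apply, ha, hb, coe_decompose_add_apply, add_smul]

theorem Submodule.IsHomogeneous.smul {I : Ideal A} (hI : I.IsHomogeneous 𝒜) {V : Submodule A M}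
    (hV : V.IsHomogeneous ℳ) : (I • V).IsHomogeneous ℳ := by
  classical
  intro n x hx
  refine Submodule.smul_induction_on hx (fun a ha v hv => ?_) (fun x y hx hy => ?_)
  · rw [coe_decompose_smul (𝒜 := 𝒜)]
    exact sum_mem fun i _ => Submodule.smul_mem_smul (hI i ha) (hV _ hv)
  · rw [coe_decompose_add_apply]
    exact add_mem hx hy

theorem Submodule.FG.exists_forall_lt_mem_smul {V : Submodule A M} (hVfg : V.FG)
    (hV : V.IsHomogeneous ℳ) {I : Ideal A} (hI : ∀ i < 0, ∀ c ∈ 𝒜 i, c ∈ I) :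
    ∃ n₀ : ℤ, ∀ n < n₀, ∀ v ∈ V, v ∈ ℳ n → v ∈ I • V := by
  classical
  obtain ⟨s, rfl⟩ := hVfg
  obtain ⟨n₀, hn₀⟩ := (s.biUnion fun x => (decompose ℳ x).support).bddBelow
  refine ⟨n₀, fun n hn v hv hvn => ?_⟩
  obtain ⟨c, -, rfl⟩ := Submodule.mem_span_finset.mp hv
  rw [← decompose_of_mem_same ℳ hvn, decompose_sum, DFinsupp.finsetSum_apply,
    AddSubgroup.val_finsetSum]
  refine sum_mem fun x hx => ?_
  rw [coe_decompose_smul (𝒜 := 𝒜)]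
  refine sum_mem fun i _ => ?_
  by_cases hi : i < 0
  · exact Submodule.smul_mem_smul (hI i hi _ (SetLike.coe_mem _)) (hV _ (Submodule.subset_span hx))
  · have hx0 : decompose ℳ x (n - i) = 0 := DFinsupp.notMem_support_iff.mp fun h =>
      absurd (hn₀ (Finset.mem_biUnion.mpr ⟨x, hx, h⟩)) (by omega)
    rw [hx0, ZeroMemClass.coe_zero, smul_zero]
    exact zero_mem _

end GradedModule

namespace SemiFrame

variable {A : Type*} [CommRing A] {𝒜 : ℤ → AddSubgroup A} [GradedRing 𝒜] (SF : SemiFrame 𝒜)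

theorem exists_mem_neg_one_tau_eq_one : ∃ a ∈ 𝒜 (-1), SF.tau a = 1 := by
  simpa using SF.tau_surj_neg 1 le_rfl 1 (SetLike.one_mem_graded 𝒜)

section

variable {SF} {a : A}

theorem mul_eq_tau (ha : a ∈ 𝒜 (-1)) (hτa : SF.tau a = 1) {s : A} (hs : s ∈ 𝒜 1) :
    a * s = SF.tau s := by
  have has : a * s ∈ 𝒜 0 := by simpa using SetLike.mul_mem_graded ha hs
  rw [← SF.tau_id_zero _ has, map_mul, hτa, one_mul]

theorem mem_span_singleton_of_mem_neg (ha : a ∈ 𝒜 (-1)) (hτa : SF.tau a = 1) {n : ℤ}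
    (hn : n < 0) {c : A} (hc : c ∈ 𝒜 n) : c ∈ Ideal.span {a} := by
  obtain ⟨m, rfl⟩ : ∃ m : ℕ, n = -(m + 1 : ℕ) := ⟨(-n - 1).toNat, by omega⟩
  have hpow : a ^ (m + 1) ∈ 𝒜 (-(m + 1 : ℕ)) := by
    simpa [nsmul_eq_mul] using SetLike.pow_mem_graded (m + 1) ha
  have hτc : SF.tau c * a ^ (m + 1) ∈ 𝒜 (-(m + 1 : ℕ)) := by
    simpa using SetLike.mul_mem_graded (SF.tau_mem_zero c) hpow
  have hc_eq : c = SF.tau c * a ^ (m + 1) :=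
    SF.tau_inj_neg (m + 1) (by omega) c hc _ hτc <| by
      rw [map_mul, map_pow, hτa, one_pow, mul_one, SF.tau_id_zero _ (SF.tau_mem_zero c)]
  rw [hc_eq, pow_succ, ← mul_assoc]
  exact Ideal.mul_mem_left _ _ (Ideal.mem_span_singleton_self a)

theorem kerNu_le_span_singleton_sup_posIdeal (ha : a ∈ 𝒜 (-1)) (hτa : SF.tau a = 1) :
    kerNu 𝒜 SF.tau ≤ Ideal.span {a} ⊔ posIdeal 𝒜 := by
  rw [kerNu, Ideal.span_le]
  rintro x (hx | ⟨s, hs, rfl⟩)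
  · obtain ⟨n, hn, hxn⟩ := Set.mem_iUnion₂.mp hx
    rcases hn.lt_or_gt with hn | hn
    · exact Submodule.mem_sup_left (mem_span_singleton_of_mem_neg ha hτa hn hxn)
    · exact Submodule.mem_sup_right (Ideal.subset_span (Set.mem_iUnion₂.mpr ⟨n, hn, hxn⟩))
  · rw [← mul_eq_tau ha hτa hs]
    exact Submodule.mem_sup_left (Ideal.mul_mem_right _ _ (Ideal.mem_span_singleton_self a))

theorem isUnit_decompose_zero (ha : a ∈ 𝒜 (-1)) (hτa : SF.tau a = 1) {r : A}
    (hr : r - 1 ∈ Ideal.span {a}) : IsUnit (decompose 𝒜 r 0 : A) := by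
  obtain ⟨b, hb⟩ := Ideal.mem_span_singleton'.mp hr
  have hb₁ : (decompose 𝒜 b 1 : A) ∈ 𝒜 1 := SetLike.coe_mem _
  have hr₀ : (decompose 𝒜 r 0 : A) = 1 - SF.tau (decompose 𝒜 b 1) * -1 := by
    rw [show r = a • b + 1 by rw [smul_eq_mul, mul_comm, hb, sub_add_cancel],
      coe_decompose_add_apply,
      coe_decompose_smul_of_left_mem (ℳ := 𝒜) ha,
      decompose_of_mem_same 𝒜 (SetLike.one_mem_graded 𝒜), zero_sub, neg_neg, smul_eq_mul,
      mul_eq_tau ha hτa hb₁]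
    ring
  obtain ⟨z, -, hz⟩ := SF.tau_S1_rad _ hb₁ (-1) (neg_mem (SetLike.one_mem_graded 𝒜))
  exact hr₀ ▸ IsUnit.of_mul_eq_one z hz

end

theorem le_of_le_sup_kerNu_smul {M : Type*} [AddCommGroup M] [Module A M]
    {ℳ : ℤ → AddSubgroup M} [Decomposition ℳ] [SetLike.GradedSMul 𝒜 ℳ] {V W : Submodule A M}
    (hVfg : V.FG) (hV : V.IsHomogeneous ℳ) (hW : W.IsHomogeneous ℳ)
    (hle : V ≤ W ⊔ kerNu 𝒜 SF.tau • V) : V ≤ W := by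
  obtain ⟨a, ha, hτa⟩ := SF.exists_mem_neg_one_tau_eq_one
  have hspan : (Ideal.span {a}).IsHomogeneous 𝒜 :=
    Ideal.homogeneous_span 𝒜 _ (by simpa using ⟨-1, ha⟩)
  set W' := W ⊔ Ideal.span {a} • V
  obtain ⟨n₀, hn₀⟩ := hVfg.exists_forall_lt_mem_smul hV fun i hi c hc =>
    mem_span_singleton_of_mem_neg ha hτa hi hc
  have hVW' : V ≤ W' := by
    refine hV.le_of_le_sup_posIdeal_smul (hW.sup (hspan.smul hV)) (𝒜 := 𝒜) (n₀ := n₀)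
      (fun n hn v hv hvn => Submodule.mem_sup_right (hn₀ n hn v hv hvn)) (hle.trans ?_)
    calc W ⊔ kerNu 𝒜 SF.tau • V ≤ W ⊔ (Ideal.span {a} ⊔ posIdeal 𝒜) • V :=
          sup_le_sup_left (Submodule.smul_mono_left
            (kerNu_le_span_singleton_sup_posIdeal ha hτa)) _
      _ = W' ⊔ posIdeal 𝒜 • V := by rw [Submodule.sup_smul, sup_assoc]
  obtain ⟨r, hr, hrV⟩ := Submodule.exists_sub_one_mem_and_smul_le_of_fg_of_le_sup hVfg le_rfl hVW'
  obtain ⟨u, hu⟩ := isUnit_decompose_zero ha hτa hr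
  refine hV.le_of_forall_mem fun n v hv hvn => ?_
  have huv : (u : A) • v ∈ W := by
    rw [hu, ← coe_decompose_smul_of_right_mem hvn]
    exact hW n (hrV (Submodule.smul_mem_pointwise_smul v r V hv))
  simpa using W.smul_mem (↑u⁻¹ : A) huv

end SemiFrame

section BaseChange

open TensorProduct

variable {R M N : Type*} [CommRing R] [AddCommGroup M] [Module R M] [AddCommGroup N] [Module R N]
  (I : Ideal R)

theorem TensorProduct.one_tmul_eq_zero_iff_mem_smul_top (x : M) :
    (1 : R ⧸ I) ⊗ₜ[R] x = 0 ↔ x ∈ I • (⊤ : Submodule R M) := by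
  rw [← (quotTensorEquivQuotSMul M I).map_eq_zero_iff, quotTensorEquivQuotSMul_mk_one_tmul,
    Submodule.Quotient.mk_eq_zero]

theorem TensorProduct.exists_one_tmul_eq (t : (R ⧸ I) ⊗[R] M) :
    ∃ x : M, (1 : R ⧸ I) ⊗ₜ[R] x = t := by
  obtain ⟨x, hx⟩ := Submodule.Quotient.mk_surjective _ (quotTensorEquivQuotSMul M I t)
  exact ⟨x, by rw [← quotTensorEquivQuotSMul_symm_mk, hx, LinearEquiv.symm_apply_apply]⟩

variable {I} {f : N →ₗ[R] M}

theorem LinearMap.range_sup_smul_top_eq_top_of_surjective_baseChange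
    (hf : Function.Surjective (f.baseChange (R ⧸ I))) : range f ⊔ I • ⊤ = ⊤ := by
  refine eq_top_iff.mpr fun m _ => ?_
  obtain ⟨t, ht⟩ := hf (1 ⊗ₜ m)
  obtain ⟨x, rfl⟩ := exists_one_tmul_eq I t
  rw [baseChange_tmul, ← sub_eq_zero, ← tmul_sub, one_tmul_eq_zero_iff_mem_smul_top] at ht
  rw [← sub_sub_cancel (f x) m]
  exact sub_mem (Submodule.mem_sup_left ⟨x, rfl⟩) (Submodule.mem_sup_right ht)

theorem LinearMap.ker_le_smul_top_of_injective_baseChange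
    (hf : Function.Injective (f.baseChange (R ⧸ I))) : ker f ≤ I • ⊤ := fun x hx => by
  rw [← one_tmul_eq_zero_iff_mem_smul_top]
  exact hf (by rw [baseChange_tmul, mem_ker.mp hx, tmul_zero, map_zero])

theorem LinearMap.range_id_sub_comp_eq_ker {g : M →ₗ[R] N} (hfg : f ∘ₗ g = id) :
    range (id - g ∘ₗ f) = ker f := by
  have hfg' : ∀ y, f (g y) = y := LinearMap.congr_fun hfg
  refine le_antisymm ?_ fun x hx => ⟨x, by simp [mem_ker.mp hx]⟩
  rintro _ ⟨x, rfl⟩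
  simp [hfg']

theorem LinearMap.ker_le_smul_ker_of_comp_eq_id {g : M →ₗ[R] N} (hfg : f ∘ₗ g = id)
    (h : ker f ≤ I • ⊤) : ker f ≤ I • ker f := by
  intro x hx
  have hx_eq : (id - g ∘ₗ f : N →ₗ[R] N) x = x := by simp [mem_ker.mp hx]
  rw [← hx_eq, ← range_id_sub_comp_eq_ker hfg, range_eq_map, ← Submodule.map_smul'']
  exact Submodule.mem_map_of_mem (h hx)

end BaseChange

open TensorProduct in
/-- Let `(S, τ)` be a semi-frame for `R = S₀/τ(S₁)`, let `M` be a
finitely generated graded `S`-module that is projective as an `S`-module, and let `N`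
be a finitely generated graded `S`-module.  A homomorphism `f : N → M` of graded
`S`-modules is bijective iff its reduction `f̄ : N ⊗_{S,ν} R → M ⊗_{S,ν} R` is
bijective. -/
theorem gradedModuleHom_bijective_iff_baseChange_bijective
    {A : Type*} [CommRing A] (𝒜 : ℤ → AddSubgroup A) [GradedRing 𝒜]
    (SF : SemiFrame 𝒜)
    {M : Type*} [AddCommGroup M] [Module A M]
    (ℳ : ℤ → AddSubgroup M)
    (hMinternal : DirectSum.IsInternal ℳ)
    (hMgradedSMul : ∀ (i j : ℤ), ∀ a ∈ 𝒜 i, ∀ x ∈ ℳ j, a • x ∈ ℳ (i + j))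
    [Module.Finite A M] [Module.Projective A M]
    {N : Type*} [AddCommGroup N] [Module A N]
    (𝒩 : ℤ → AddSubgroup N)
    (hNinternal : DirectSum.IsInternal 𝒩)
    (hNgradedSMul : ∀ (i j : ℤ), ∀ a ∈ 𝒜 i, ∀ x ∈ 𝒩 j, a • x ∈ 𝒩 (i + j))
    [Module.Finite A N]
    (f : N →ₗ[A] M)
    (hfgraded : ∀ n : ℤ, ∀ x ∈ 𝒩 n, f x ∈ ℳ n) :
    Function.Bijective f ↔
      Function.Bijective (LinearMap.baseChange (A ⧸ kerNu 𝒜 SF.tau) f) := by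
  let := hMinternal.chooseDecomposition
  let := hNinternal.chooseDecomposition
  have : SetLike.GradedSMul 𝒜 ℳ := ⟨@fun i j _ _ ha hx => hMgradedSMul i j _ ha _ hx⟩
  have : SetLike.GradedSMul 𝒜 𝒩 := ⟨@fun i j _ _ ha hx => hNgradedSMul i j _ ha _ hx⟩
  refine ⟨fun hf => ((LinearEquiv.ofBijective f hf).baseChange A _ N M).bijective,
    fun hf => ?_⟩
  have hsurj : Function.Surjective f := by
    rw [← LinearMap.range_eq_top, ← top_le_iff]
    refine SF.le_of_le_sup_kerNu_smul Module.Finite.fg_top (fun _ _ _ => trivial)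
      (LinearMap.isHomogeneous_range_of_map_mem hfgraded) ?_
    rw [LinearMap.range_sup_smul_top_eq_top_of_surjective_baseChange hf.2]
  obtain ⟨g, hg⟩ := Module.projective_lifting_property f LinearMap.id hsurj
  have hker : (LinearMap.ker f).FG := by
    rw [← LinearMap.range_id_sub_comp_eq_ker hg, LinearMap.range_eq_map]
    exact Module.Finite.fg_top.map _
  refine ⟨LinearMap.ker_eq_bot.mp (le_bot_iff.mp ?_), hsurj⟩
  refine SF.le_of_le_sup_kerNu_smul hker (LinearMap.isHomogeneous_ker_of_map_mem hfgraded)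
    (fun _ _ hx => by simp [(Submodule.mem_bot A).mp hx]) ?_
  rw [bot_sup_eq]
  exact LinearMap.ker_le_smul_ker_of_comp_eq_id hg
    (LinearMap.ker_le_smul_top_of_injective_baseChange hf.1)
end

section
/- Let S = ⊕_{n∈ℤ} Sₙ be a ℤ-graded commutative ring and V• = (V^m)_{m∈ℕ} a decreasing sequence of graded ideals of S (so V^{m+1}ₙ ⊆ V^mₙ for all m, n). Suppose S is V•-adic, i.e. for every n the natural map Sₙ → lim_m Sₙ/V^mₙ is bijective. Then every finitely generated graded S-module M that is projective over S is V•-adic, i.e. for every n the natural map Mₙ → lim_m Mₙ/(Mₙ ∩ V^m M) is bijective. -/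
/-!
Pick finitely many homogeneous generators `eₚ` of `M`, of degrees `dₚ`, and by projectivity a linear
section `s` of `(cₚ) ↦ ∑ cₚ eₚ`. Keeping only the degree-`(n - dₚ)` part of the `p`-th coordinate of
`s` gives, on `Mₙ`, an additive section with coordinates in `S_{n - dₚ}`; since each `V^m` is
homogeneous, it maps `Mₙ ∩ V^m M` into `V^m` coordinatewise. Thus `Mₙ` is a retract of
`⊕ₚ S_{n - dₚ}` compatibly with the filtrations, and both halves of adicness transfer
coordinatewise from `S` to `M`.
-/

open DirectSum

section

variable {A M : Type*} [CommRing A] [AddCommGroup M] [Module A M]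

theorem Ideal.apply_mem_of_mem_smul_top (I : Ideal A) (f : M →ₗ[A] A) {x : M}
    (hx : x ∈ I • (⊤ : Submodule A M)) : f x ∈ I := by
  simpa [Ideal.smul_eq_mul, Ideal.mul_top] using Submodule.smul_top_le_comap_smul_top I f hx

variable (𝒜 : ℤ → AddSubgroup A) (ℳ : ℤ → AddSubgroup M)

theorem coe_decompose_smul_of_mem [Decomposition 𝒜] [Decomposition ℳ]
    (hgradedSMul : ∀ (i j : ℤ), ∀ a ∈ 𝒜 i, ∀ x ∈ ℳ j, a • x ∈ ℳ (i + j))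
    (c : A) {d : ℤ} {y : M} (hy : y ∈ ℳ d) (n : ℤ) :
    (decompose ℳ (c • y) n : M) = (decompose 𝒜 c (n - d) : A) • y := by
  induction c using Decomposition.inductionOn 𝒜 with
  | zero => simp
  | @homogeneous i c =>
    have hcy : (c : A) • y ∈ ℳ (i + d) := hgradedSMul i d c c.2 y hy
    by_cases hi : i = n - d
    · subst hi
      rw [decompose_of_mem_same 𝒜 c.2, decompose_of_mem_same ℳ (by rwa [sub_add_cancel] at hcy)]
    · rw [decompose_of_mem_ne 𝒜 c.2 hi, decompose_of_mem_ne ℳ hcy (by omega), zero_smul]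
  | add c c' hc hc' => simp [add_smul, hc, hc']

theorem exists_homogeneous_span_eq_top [Decomposition ℳ] [Module.Finite A M] :
    ∃ (ι : Type) (_ : Fintype ι) (e : ι → M) (d : ι → ℤ),
      (∀ p, e p ∈ ℳ (d p)) ∧ Submodule.span A (Set.range e) = ⊤ := by
  classical
  obtain ⟨k, g, hg⟩ := Module.Finite.exists_fin (R := A) (M := M)
  refine ⟨(j : Fin k) × (decompose ℳ (g j)).support, inferInstance,
    fun p => decompose ℳ (g p.1) p.2, fun p => p.2, fun p => (decompose ℳ _ _).2, ?_⟩
  rw [eq_top_iff, ← hg, Submodule.span_le]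
  rintro _ ⟨j, rfl⟩
  rw [← sum_support_decompose ℳ (g j)]
  exact Submodule.sum_mem _ fun i hi => Submodule.subset_span ⟨⟨j, ⟨i, hi⟩⟩, rfl⟩

/-- `M` as a direct summand of the finite free module `ι → A`, projected onto `M` by homogeneous
generators `gen`, with splitting `coeff`. -/
structure HomogeneousSplitting (A : Type*) [CommRing A] [Module A M] (ι : Type*) [Fintype ι] where
  gen : ι → M
  deg : ι → ℤ
  gen_mem : ∀ p, gen p ∈ ℳ (deg p)
  coeff : M →ₗ[A] ι → A
  sum_coeff_smul : ∀ x, ∑ p, coeff x p • gen p = x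

theorem HomogeneousSplitting.exists [Decomposition ℳ] [Module.Finite A M]
    [Module.Projective A M] :
    ∃ (ι : Type) (_ : Fintype ι), Nonempty (HomogeneousSplitting ℳ A ι) := by
  obtain ⟨ι, _, e, d, he, hspan⟩ := exists_homogeneous_span_eq_top ℳ (A := A)
  have hsurj : LinearMap.range (Fintype.linearCombination A e) = ⊤ := by
    rw [Fintype.range_linearCombination, hspan]
  obtain ⟨s, hs⟩ := (Fintype.linearCombination A e).exists_rightInverse_of_surjective hsurj
  exact ⟨ι, inferInstance, ⟨e, d, he, s, fun x => LinearMap.congr_fun hs x⟩⟩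

variable {ℳ}

namespace HomogeneousSplitting

section

variable {ι : Type*} [Fintype ι] (σ : HomogeneousSplitting ℳ A ι)

theorem sum_smul_gen_mem (hgradedSMul : ∀ (i j : ℤ), ∀ a ∈ 𝒜 i, ∀ x ∈ ℳ j, a • x ∈ ℳ (i + j))
    {n : ℤ} {c : ι → A} (hc : ∀ p, c p ∈ 𝒜 (n - σ.deg p)) : ∑ p, c p • σ.gen p ∈ ℳ n :=
  AddSubgroup.sum_mem _ fun p _ => by
    simpa using hgradedSMul _ _ _ (hc p) _ (σ.gen_mem p)

def homogeneousCoeff [Decomposition 𝒜] (n : ℤ) : M →+ ι → A where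
  toFun x p := decompose 𝒜 (σ.coeff x p) (n - σ.deg p)
  map_zero' := by ext; simp
  map_add' x y := by ext; simp

variable [GradedRing 𝒜]

theorem homogeneousCoeff_mem (n : ℤ) (x : M) (p : ι) :
    σ.homogeneousCoeff 𝒜 n x p ∈ 𝒜 (n - σ.deg p) :=
  (decompose 𝒜 _ _).2

theorem homogeneousCoeff_mem_of_mem_smul_top {I : Ideal A} (hI : I.IsHomogeneous 𝒜) (n : ℤ)
    {x : M} (hx : x ∈ I • (⊤ : Submodule A M)) (p : ι) : σ.homogeneousCoeff 𝒜 n x p ∈ I :=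
  hI _ (I.apply_mem_of_mem_smul_top (LinearMap.proj p ∘ₗ σ.coeff) hx)

theorem sum_homogeneousCoeff_smul [Decomposition ℳ]
    (hgradedSMul : ∀ (i j : ℤ), ∀ a ∈ 𝒜 i, ∀ x ∈ ℳ j, a • x ∈ ℳ (i + j))
    {n : ℤ} {x : M} (hx : x ∈ ℳ n) : ∑ p, σ.homogeneousCoeff 𝒜 n x p • σ.gen p = x := by
  conv_rhs => rw [← decompose_of_mem_same ℳ hx, ← σ.sum_coeff_smul x]
  rw [decompose_sum, DFinsupp.finsetSum_apply, AddSubmonoidClass.coe_finsetSum]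
  exact Finset.sum_congr rfl fun p _ =>
    (coe_decompose_smul_of_mem 𝒜 ℳ hgradedSMul _ (σ.gen_mem p) n).symm

end

theorem eq_zero_of_forall_mem_smul_top [GradedRing 𝒜] [Decomposition ℳ]
    {ι : Type*} [Fintype ι] (σ : HomogeneousSplitting ℳ A ι)
    (hgradedSMul : ∀ (i j : ℤ), ∀ a ∈ 𝒜 i, ∀ x ∈ ℳ j, a • x ∈ ℳ (i + j))
    {V : ℕ → Ideal A} (hV : ∀ m, (V m).IsHomogeneous 𝒜)
    (hSinj : ∀ (n : ℤ), ∀ a ∈ 𝒜 n, (∀ m : ℕ, a ∈ V m) → a = 0)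
    {n : ℤ} {x : M} (hx : x ∈ ℳ n) (hxV : ∀ m, x ∈ V m • (⊤ : Submodule A M)) : x = 0 := by
  have hcoeff (p : ι) : σ.homogeneousCoeff 𝒜 n x p = 0 :=
    hSinj _ _ (σ.homogeneousCoeff_mem 𝒜 n x p) fun m =>
      σ.homogeneousCoeff_mem_of_mem_smul_top 𝒜 (hV m) n (hxV m) p
  rw [← σ.sum_homogeneousCoeff_smul 𝒜 hgradedSMul hx]
  simp [hcoeff]

theorem exists_sub_mem_smul_top [GradedRing 𝒜] [Decomposition ℳ]
    {ι : Type*} [Fintype ι] (σ : HomogeneousSplitting ℳ A ι)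
    (hgradedSMul : ∀ (i j : ℤ), ∀ a ∈ 𝒜 i, ∀ x ∈ ℳ j, a • x ∈ ℳ (i + j))
    {V : ℕ → Ideal A} (hV : ∀ m, (V m).IsHomogeneous 𝒜)
    (hSsurj : ∀ (n : ℤ) (x : ℕ → A), (∀ m, x m ∈ 𝒜 n) →
      (∀ m, x (m + 1) - x m ∈ V m) → ∃ a ∈ 𝒜 n, ∀ m, a - x m ∈ V m)
    {n : ℤ} {x : ℕ → M} (hx : ∀ m, x m ∈ ℳ n)
    (hxV : ∀ m, x (m + 1) - x m ∈ V m • (⊤ : Submodule A M)) :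
    ∃ y ∈ ℳ n, ∀ m, y - x m ∈ V m • (⊤ : Submodule A M) := by
  set t := σ.homogeneousCoeff 𝒜 n
  have hcauchy (p : ι) (m : ℕ) : t (x (m + 1)) p - t (x m) p ∈ V m := by
    simpa [← Pi.sub_apply, ← map_sub] using
      σ.homogeneousCoeff_mem_of_mem_smul_top 𝒜 (hV m) n (hxV m) p
  choose a ha𝒜 haV using fun p =>
    hSsurj _ (fun m => t (x m) p) (fun m => σ.homogeneousCoeff_mem 𝒜 n _ p) (hcauchy p)
  refine ⟨∑ p, a p • σ.gen p, σ.sum_smul_gen_mem 𝒜 hgradedSMul ha𝒜, fun m => ?_⟩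
  rw [← σ.sum_homogeneousCoeff_smul 𝒜 hgradedSMul (hx m), ← Finset.sum_sub_distrib]
  exact Submodule.sum_mem _ fun p _ => by
    rw [← sub_smul]
    exact Submodule.smul_mem_smul (haV p m) Submodule.mem_top

end HomogeneousSplitting

end

theorem finiteProjectiveGradedModule_isAdic_general
    {A : Type*} [CommRing A] (𝒜 : ℤ → AddSubgroup A) [GradedRing 𝒜]
    (V : ℕ → Ideal A)
    (hhomogeneous : ∀ m : ℕ, (V m).IsHomogeneous 𝒜)
    -- `S` is `V•`-adic:
    (hSinj : ∀ (n : ℤ), ∀ a ∈ 𝒜 n, (∀ m : ℕ, a ∈ V m) → a = 0)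
    (hSsurj : ∀ (n : ℤ) (x : ℕ → A), (∀ m, x m ∈ 𝒜 n) →
      (∀ m, x (m + 1) - x m ∈ V m) → ∃ a ∈ 𝒜 n, ∀ m, a - x m ∈ V m)
    -- `M` is a finite projective graded `S`-module:
    {M : Type*} [AddCommGroup M] [Module A M]
    (ℳ : ℤ → AddSubgroup M)
    (hinternal : DirectSum.IsInternal ℳ)
    (hgradedSMul : ∀ (i j : ℤ), ∀ a ∈ 𝒜 i, ∀ x ∈ ℳ j, a • x ∈ ℳ (i + j))
    [Module.Finite A M] [Module.Projective A M] :
    (∀ (n : ℤ), ∀ x ∈ ℳ n, (∀ m : ℕ, x ∈ (V m) • (⊤ : Submodule A M)) → x = 0) ∧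
    (∀ (n : ℤ) (x : ℕ → M), (∀ m, x m ∈ ℳ n) →
      (∀ m, x (m + 1) - x m ∈ (V m) • (⊤ : Submodule A M)) →
      ∃ y ∈ ℳ n, ∀ m, y - x m ∈ (V m) • (⊤ : Submodule A M)) := by
  let := hinternal.chooseDecomposition
  obtain ⟨ι, _, ⟨σ⟩⟩ := HomogeneousSplitting.exists ℳ (A := A)
  exact ⟨fun _ _ hx hxV =>
      σ.eq_zero_of_forall_mem_smul_top 𝒜 hgradedSMul hhomogeneous hSinj hx hxV,
    fun _ _ hx hxV => σ.exists_sub_mem_smul_top 𝒜 hgradedSMul hhomogeneous hSsurj hx hxV⟩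

/-- Let `S = ⨁ₙ Sₙ` be a ℤ-graded commutative ring and
`V• = (V^m)_{m∈ℕ}` a decreasing sequence of graded (i.e. homogeneous) ideals of `S`.
Suppose `S` is `V•`-adic, i.e. for every `n` the natural map
`Sₙ → lim_m Sₙ/V^mₙ` is bijective — elementwise: its kernel `⋂ₘ (Sₙ ∩ V^m)` is zero
(injectivity) and every compatible sequence `(xₘ)` with `xₘ ∈ Sₙ` and
`x_{m+1} - xₘ ∈ V^m` is realized by some `a ∈ Sₙ` with `a - xₘ ∈ V^m` for all `m`
(surjectivity).  Then every finitely generated graded `S`-module `M` that is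
projective over `S` is `V•`-adic: for every `n` the natural map
`Mₙ → lim_m Mₙ/(Mₙ ∩ V^m M)` is bijective, where `V^m M = V^m • M`. -/
theorem finiteProjectiveGradedModule_isAdic
    {A : Type*} [CommRing A] (𝒜 : ℤ → AddSubgroup A) [GradedRing 𝒜]
    (V : ℕ → Ideal A)
    (hdecreasing : ∀ m : ℕ, V (m + 1) ≤ V m)
    (hhomogeneous : ∀ m : ℕ, (V m).IsHomogeneous 𝒜)
    -- `S` is `V•`-adic:
    (hSinj : ∀ (n : ℤ), ∀ a ∈ 𝒜 n, (∀ m : ℕ, a ∈ V m) → a = 0)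
    (hSsurj : ∀ (n : ℤ) (x : ℕ → A), (∀ m, x m ∈ 𝒜 n) →
      (∀ m, x (m + 1) - x m ∈ V m) → ∃ a ∈ 𝒜 n, ∀ m, a - x m ∈ V m)
    -- `M` is a finite projective graded `S`-module:
    {M : Type*} [AddCommGroup M] [Module A M]
    (ℳ : ℤ → AddSubgroup M)
    (hinternal : DirectSum.IsInternal ℳ)
    (hgradedSMul : ∀ (i j : ℤ), ∀ a ∈ 𝒜 i, ∀ x ∈ ℳ j, a • x ∈ ℳ (i + j))
    [Module.Finite A M] [Module.Projective A M] :
    (∀ (n : ℤ), ∀ x ∈ ℳ n, (∀ m : ℕ, x ∈ (V m) • (⊤ : Submodule A M)) → x = 0) ∧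
    (∀ (n : ℤ) (x : ℕ → M), (∀ m, x m ∈ ℳ n) →
      (∀ m, x (m + 1) - x m ∈ (V m) • (⊤ : Submodule A M)) →
      ∃ y ∈ ℳ n, ∀ m, y - x m ∈ (V m) • (⊤ : Submodule A M)) :=
  finiteProjectiveGradedModule_isAdic_general 𝒜 V hhomogeneous hSinj hSsurj ℳ hinternal hgradedSMul
end

section
/- Let p be a prime, m ≥ 1 an integer, B a commutative ring in which p is nilpotent, B → A a surjective ring homomorphism with kernel J, and B → B' a faithfully flat étale ring homomorphism. Set B'' = B' ⊗_B B', A' = A ⊗_B B', A'' = A ⊗_B B'', and J' = ker(B' → A'), J'' = ker(B'' → A''). Then the sequence of abelian groups 0 → I_m(B) ⊕ J → I_m(B') ⊕ J' ⇉ I_m(B'') ⊕ J'' is exact: the first map is injective, and its image is the equalizer of the two maps induced by the two inclusions B' → B'', b' ↦ b'⊗1 and b' ↦ 1⊗b'. -/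
open TensorProduct

universe u

/-- If `B'` is faithfully flat over `B` and `C` is any `B`-module (here a `B`-algebra),
then `c ⊗ 1 = 0` in `C ⊗[B] B'` implies `c = 0`. -/
lemma FF.tmul_one_eq_zero {B C B' : Type u} [CommRing B] [CommRing C] [CommRing B']
    [Algebra B C] [Algebra B B'] [Module.FaithfullyFlat B B']
    (a : C) (h : a ⊗ₜ[B] (1 : B') = 0) : a = 0 := by
  set g : B →ₗ[B] C := LinearMap.toSpanSingleton B C a
  have hg : g.rTensor B' = 0 := by
    apply TensorProduct.ext'
    intro c z
    have h1 : a ⊗ₜ[B] z = (a ⊗ₜ[B] (1 : B')) * ((1 : C) ⊗ₜ[B] z) := by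
      rw [Algebra.TensorProduct.tmul_mul_tmul, mul_one, one_mul]
    simp only [LinearMap.rTensor_tmul, LinearMap.toSpanSingleton_apply, LinearMap.zero_apply, g]
    rw [← TensorProduct.smul_tmul', h1, h, zero_mul, smul_zero]
  have : g = 0 := (Module.FaithfullyFlat.zero_iff_rTensor_zero B B' g).2 hg
  simpa [g] using congr($this 1)

/-- Faithfully flat maps are injective. -/
lemma FF.algebraMap_injective (B B' : Type u) [CommRing B] [CommRing B']
    [Algebra B B'] [Module.FaithfullyFlat B B'] :
    Function.Injective (algebraMap B B') := by
  rw [injective_iff_map_eq_zero]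
  intro b hb
  apply FF.tmul_one_eq_zero (B := B) (B' := B') (C := B) b
  have : b ⊗ₜ[B] (1 : B') = (1 : B) ⊗ₜ[B] (algebraMap B B' b) :=
    calc b ⊗ₜ[B] (1 : B') = (b • (1 : B)) ⊗ₜ[B] (1 : B') := by rw [smul_eq_mul, mul_one]
      _ = (1 : B) ⊗ₜ[B] (b • (1 : B')) := TensorProduct.smul_tmul b 1 1
      _ = (1 : B) ⊗ₜ[B] (algebraMap B B' b) := by rw [Algebra.algebraMap_eq_smul_one]
  rw [this, hb, TensorProduct.tmul_zero]

/-- Amitsur-type descent for elements: if `x ⊗ 1 = 1 ⊗ x` in `B' ⊗[B] B'` with `B'`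
faithfully flat over `B`, then `x` comes from `B`. -/
lemma FF.descent (B B' : Type u) [CommRing B] [CommRing B']
    [Algebra B B'] [Module.FaithfullyFlat B B']
    (x : B') (hx : x ⊗ₜ[B] (1 : B') = (1 : B') ⊗ₜ[B] x) :
    ∃ b, algebraMap B B' b = x := by
  classical
  set f : B →ₗ[B] B' := Algebra.linearMap B B' with hf
  set d : B' →ₗ[B] B' ⊗[B] B' :=
    ((TensorProduct.mk B B' B').flip 1) - (TensorProduct.mk B B' B' 1) with hd
  have hdf : d ∘ₗ f = 0 := by
    apply LinearMap.ext
    intro b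
    simp only [LinearMap.comp_apply, LinearMap.sub_apply, hd, hf, Algebra.linearMap_apply,
      TensorProduct.mk_apply, LinearMap.flip_apply, LinearMap.zero_apply,
      Algebra.algebraMap_eq_smul_one]
    rw [TensorProduct.smul_tmul]
    simp
  have hexact : Function.Exact f d := by
    apply Module.FaithfullyFlat.lTensor_reflects_exact B B'
    set h : B' ⊗[B] (B' ⊗[B] B') →ₗ[B] B' ⊗[B] B' :=
      (LinearMap.rTensor B' (LinearMap.mul' B B')) ∘ₗ
        (TensorProduct.assoc B B' B' B').symm.toLinearMap with hh
    set σ : B' ⊗[B] B' →ₗ[B] B' ⊗[B] B :=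
      ((TensorProduct.mk B B' B).flip 1) ∘ₗ (LinearMap.mul' B B') with hσ
    have key : h ∘ₗ d.lTensor B' = f.lTensor B' ∘ₗ σ - LinearMap.id := by
      apply TensorProduct.ext'
      intro z w
      simp [hh, hσ, hd, hf, TensorProduct.tmul_sub]
    intro u
    constructor
    · intro hu
      refine ⟨σ u, ?_⟩
      have := congr($key u)
      simp only [LinearMap.comp_apply, LinearMap.sub_apply, LinearMap.id_apply, hu,
        map_zero] at this
      exact (sub_eq_zero.1 this.symm).symm ▸ rfl
    · rintro ⟨v, rfl⟩
      rw [← LinearMap.comp_apply, ← LinearMap.lTensor_comp, hdf]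
      simp
  obtain ⟨b, hb⟩ := (hexact x).1 (by simp [hd, hx])
  exact ⟨b, hb⟩

/-- **Statement 7.** Let `p` be a prime, `m ≥ 1`, `B` a commutative ring in which `p`
is nilpotent, `B → A` a surjective ring homomorphism with kernel `J`, and `B → B'` a
faithfully flat étale ring homomorphism.  Set `B'' = B' ⊗_B B'`, `A' = A ⊗_B B'`,
`A'' = A ⊗_B B''`, and `J' = ker (B' → A')`, `J'' = ker (B'' → A'')`.  Then the
sequence of abelian groups `0 → I_m(B) ⊕ J → I_m(B') ⊕ J' ⇉ I_m(B'') ⊕ J''` is exact: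
the first map is injective, and its image is the equalizer of the two maps induced by
the inclusions `b' ↦ b' ⊗ 1` and `b' ↦ 1 ⊗ b'` of `B'` into `B''`.

Here `I_m(B) = ker (w₀ : W_m(B) → B)` is the set of `m`-truncated `p`-typical Witt
vectors with vanishing zeroth coefficient, membership in `J'` is expressed by
vanishing of the image in `A' = A ⊗[B] B'` under `b' ↦ 1 ⊗ b'`, and the functorial
maps on truncated Witt vectors are characterized coefficientwise. -/
theorem truncatedWittIdeal_sum_kernel_equalizer
    (p m : ℕ) [Fact p.Prime] (hm : 0 < m)
    (B A B' : Type u) [CommRing B] [CommRing A] [CommRing B']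
    (hpB : IsNilpotent (p : B))
    [Algebra B A] (hsurj : Function.Surjective (algebraMap B A))
    [Algebra B B'] [Algebra.Etale B B'] [Module.FaithfullyFlat B B']
    -- `W_m` applied to `B → B'`:
    (Wι : TruncatedWittVector p m B →+* TruncatedWittVector p m B')
    (hWι : ∀ (x : TruncatedWittVector p m B) (i : Fin m),
      (Wι x).coeff i = algebraMap B B' (x.coeff i))
    -- `W_m` applied to the two inclusions `B' → B'' = B' ⊗[B] B'`:
    (Wp₁ Wp₂ : TruncatedWittVector p m B' →+* TruncatedWittVector p m (B' ⊗[B] B'))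
    (hWp₁ : ∀ (y : TruncatedWittVector p m B') (i : Fin m),
      (Wp₁ y).coeff i = y.coeff i ⊗ₜ[B] 1)
    (hWp₂ : ∀ (y : TruncatedWittVector p m B') (i : Fin m),
      (Wp₂ y).coeff i = 1 ⊗ₜ[B] y.coeff i) :
    -- injectivity of `I_m(B) ⊕ J → I_m(B') ⊕ J'`:
    (∀ (x : TruncatedWittVector p m B) (j : B),
      x.coeff ⟨0, hm⟩ = 0 → algebraMap B A j = 0 →
      Wι x = 0 → algebraMap B B' j = 0 → x = 0 ∧ j = 0) ∧
    -- the image lands in `I_m(B') ⊕ J'` and is contained in the equalizer: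
    (∀ (x : TruncatedWittVector p m B) (j : B),
      x.coeff ⟨0, hm⟩ = 0 → algebraMap B A j = 0 →
      (Wι x).coeff ⟨0, hm⟩ = 0 ∧
      (1 : A) ⊗ₜ[B] (algebraMap B B' j) = (0 : A ⊗[B] B') ∧
      Wp₁ (Wι x) = Wp₂ (Wι x) ∧
      (algebraMap B B' j) ⊗ₜ[B] (1 : B') = (1 : B') ⊗ₜ[B] (algebraMap B B' j)) ∧
    -- the equalizer is contained in the image:
    (∀ (y : TruncatedWittVector p m B') (j' : B'),
      y.coeff ⟨0, hm⟩ = 0 → (1 : A) ⊗ₜ[B] j' = (0 : A ⊗[B] B') →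
      Wp₁ y = Wp₂ y → j' ⊗ₜ[B] (1 : B') = (1 : B') ⊗ₜ[B] j' →
      ∃ (x : TruncatedWittVector p m B) (j : B),
        x.coeff ⟨0, hm⟩ = 0 ∧ algebraMap B A j = 0 ∧
        Wι x = y ∧ algebraMap B B' j = j') := by
  classical
  have hinj : Function.Injective (algebraMap B B') := FF.algebraMap_injective B B'
  -- `c ⊗ 1 = 1 ⊗ c` for any element of the form `algebraMap B C c'` in any tensor square
  have tmul_swap : ∀ (b : B), (algebraMap B B' b) ⊗ₜ[B] (1 : B') =
      (1 : B') ⊗ₜ[B] (algebraMap B B' b) := by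
    intro b
    rw [Algebra.algebraMap_eq_smul_one, ← TensorProduct.smul_tmul]
  have one_tmul_eq : ∀ (b : B), (1 : A) ⊗ₜ[B] (algebraMap B B' b) =
      (algebraMap B A b) ⊗ₜ[B] (1 : B') := by
    intro b
    rw [Algebra.algebraMap_eq_smul_one (A := B'), Algebra.algebraMap_eq_smul_one (A := A),
      TensorProduct.tmul_smul, TensorProduct.smul_tmul']
  refine ⟨?_, ?_, ?_⟩
  · -- injectivity
    intro x j _ _ hWx hj
    constructor
    · apply TruncatedWittVector.ext
      intro i
      apply hinj
      rw [← hWι x i, hWx]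
      simp
    · exact hinj (by rw [hj, map_zero])
  · -- image lands in the equalizer
    intro x j hx0 hjA
    refine ⟨?_, ?_, ?_, tmul_swap j⟩
    · rw [hWι x ⟨0, hm⟩, hx0, map_zero]
    · rw [one_tmul_eq j, hjA, TensorProduct.zero_tmul]
    · apply TruncatedWittVector.ext
      intro i
      rw [hWp₁, hWp₂, hWι x i]
      exact tmul_swap (x.coeff i)
  · -- equalizer is contained in the image
    intro y j' hy0 hj'A hWy hj'
    have hcoeff : ∀ i : Fin m, ∃ b : B, algebraMap B B' b = y.coeff i := by
      intro i
      apply FF.descent B B'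
      rw [← hWp₁ y i, ← hWp₂ y i, hWy]
    choose b hb using hcoeff
    obtain ⟨j, hj⟩ := FF.descent B B' j' hj'
    refine ⟨TruncatedWittVector.mk p b, j, ?_, ?_, ?_, hj⟩
    · apply hinj
      rw [map_zero, TruncatedWittVector.coeff_mk, hb ⟨0, hm⟩, hy0]
    · apply FF.tmul_one_eq_zero (B := B) (B' := B')
      rw [← one_tmul_eq j, hj, hj'A]
    · apply TruncatedWittVector.ext
      intro i
      rw [hWι, TruncatedWittVector.coeff_mk, hb i]
end

section
/- Let p be a prime and let R be a commutative ring that is p-adically complete and separated (i.e. the natural map R → lim_n R/p^nR is an isomorphism). Then every finite projective R-module lifts to the p-typical Witt vectors: for every finitely generated projective R-module M there exists a finitely generated projective W(R)-module N together with an isomorphism of R-modules N ⊗_{W(R),w₀} R ≅ M, where w₀ : W(R) → R is the zeroth coefficient projection. -/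
open TensorProduct

universe u

/-!
Write `M` as the image of an idempotent matrix `E` over `R`. For `p ∈ I` the rings
`W_{n+1}(R ⧸ I ^ (n + 1))` form a tower below `W(R)` whose transition kernels are nil, and
when `R` is `I`-adically complete `W(R)` is its limit. Hence an idempotent lifts from `R ⧸ I` to
an idempotent matrix `F` over `W(R)` with `w₀(F) ≡ E` modulo `I`. Idempotents congruent modulo
an ideal inside the Jacobson radical are conjugate, so `N = im F` satisfies
`R ⊗ N ≅ im w₀(F) ≅ im E ≅ M`.
-/

theorem Matrix.isNilpotent_of_forall_isNilpotent {ι R : Type*} [Fintype ι] [DecidableEq ι]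
    [CommSemiring R] {M : Matrix ι ι R} (h : ∀ i j, IsNilpotent (M i j)) : IsNilpotent M := by
  set I : Ideal R := Ideal.span (Set.range fun ij : ι × ι => M ij.1 ij.2)
  have hI : I ≤ (⊥ : Ideal R).radical := Ideal.span_le.2 <| by
    rintro _ ⟨ij, rfl⟩
    exact h ij.1 ij.2
  obtain ⟨t, ht⟩ :=
    Ideal.exists_pow_le_of_le_radical_of_fg hI (Submodule.fg_span (Set.finite_range _))
  have hpow : ∀ m i j, (M ^ m) i j ∈ I ^ m := by
    intro m
    induction m with
    | zero => simp
    | succ m ih =>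
      intro i j
      rw [pow_succ, pow_succ, Matrix.mul_apply]
      exact Ideal.sum_mem _ fun l _ =>
        Ideal.mul_mem_mul (ih i l) (Ideal.subset_span ⟨(l, j), rfl⟩)
  exact ⟨t, Matrix.ext fun i j => ht (hpow t i j)⟩

theorem exists_isIdempotentElem_map_eq_of_isNilpotent {S T T' : Type*} [Ring S] [Ring T] [Ring T']
    (g : S →+* T) (h : S →+* T') (hnil : ∀ x, g x = 0 → IsNilpotent (h x)) {a : S}
    (ha : IsIdempotentElem (g a)) :
    ∃ a' : S, IsIdempotentElem (h a') ∧ g a' = g a := by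
  obtain ⟨N, hN⟩ := hnil (a - a ^ 2) (by rw [map_sub, map_pow, sq, ha.eq, sub_self])
  refine ⟨1 - (1 - a ^ (N + 1)) ^ (N + 1), ?_, ?_⟩
  · simp only [map_sub, map_one, map_pow]
    apply isIdempotentElem_one_sub_one_sub_pow_pow
    rw [← map_pow, ← map_sub, pow_succ, hN, zero_mul]
  · simp only [map_sub, map_one, map_pow, ha.pow_succ_eq, ha.one_sub.pow_succ_eq, sub_sub_cancel]

theorem exists_isIdempotentElem_of_tower {S : Type*} [Ring S] {T : ℕ → Type*}
    [∀ n, Ring (T n)] (f : ∀ n, S →+* T n)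
    (nil : ∀ n x, f n x = 0 → IsNilpotent (f (n + 1) x))
    (sep : ∀ x, (∀ n, f n x = 0) → x = 0)
    (complete : ∀ a : ℕ → S, (∀ n, f n (a (n + 1)) = f n (a n)) →
      ∃ b, ∀ n, f n b = f n (a n))
    {e : S} (he : IsIdempotentElem (f 0 e)) :
    ∃ e' : S, IsIdempotentElem e' ∧ f 0 e' = f 0 e := by
  have step : ∀ n a, ∃ a', IsIdempotentElem (f n a) →
      IsIdempotentElem (f (n + 1) a') ∧ f n a' = f n a := by
    intro n a
    by_cases ha : IsIdempotentElem (f n a)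
    · obtain ⟨a', ha'⟩ := exists_isIdempotentElem_map_eq_of_isNilpotent _ _ (nil n) ha
      exact ⟨a', fun _ => ha'⟩
    · exact ⟨a, fun h => absurd h ha⟩
  choose lift hlift using step
  let a : ℕ → S := fun n => Nat.rec e lift n
  have ha : ∀ n, IsIdempotentElem (f n (a n)) := by
    intro n
    induction n with
    | zero => exact he
    | succ n ih => exact (hlift n (a n) ih).1
  obtain ⟨b, hb⟩ := complete a fun n => (hlift n (a n) (ha n)).2
  refine ⟨b, sub_eq_zero.1 <| sep _ fun n => ?_, hb 0⟩
  rw [map_sub, map_mul, hb, (ha n).eq, sub_self]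

theorem IsIdempotentElem.semiconjBy_mul_add_one_sub_mul_one_sub {S : Type*} [Ring S] {e f : S}
    (he : IsIdempotentElem e) (hf : IsIdempotentElem f) :
    SemiconjBy (f * e + (1 - f) * (1 - e)) e f := by
  rw [SemiconjBy, add_mul, mul_add, mul_assoc, he.eq, ← mul_assoc, hf.eq, mul_assoc,
    he.one_sub_mul_self, ← mul_assoc, hf.mul_one_sub_self, mul_zero, zero_mul]

def LinearEquiv.rangeEquivOfSemiconj {R P Q : Type*} [Semiring R] [AddCommMonoid P]
    [Module R P] [AddCommMonoid Q] [Module R Q] (U : P ≃ₗ[R] Q)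
    {g : P →ₗ[R] P} {h : Q →ₗ[R] Q}
    (hU : U.toLinearMap ∘ₗ g = h ∘ₗ U.toLinearMap) :
    LinearMap.range g ≃ₗ[R] LinearMap.range h :=
  U.ofSubmodules _ _ <| by
    rw [← LinearMap.range_comp, hU, LinearMap.range_comp, U.range, Submodule.map_top]

namespace LinearMap

variable {A : Type*} [CommSemiring A] {P : Type*} [AddCommMonoid P] [Module A P] {g : P →ₗ[A] P}

theorem rangeRestrict_comp_subtype_of_isIdempotentElem (hg : IsIdempotentElem g) :
    g.rangeRestrict ∘ₗ (range g).subtype = LinearMap.id :=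
  LinearMap.ext fun x => Subtype.ext <| (IsIdempotentElem.mem_range_iff hg).1 x.2

theorem projective_range_of_isIdempotentElem [Module.Projective A P] (hg : IsIdempotentElem g) :
    Module.Projective A (range g) :=
  .of_split _ _ (rangeRestrict_comp_subtype_of_isIdempotentElem hg)

noncomputable def baseChangeRangeEquiv (B : Type*) [CommSemiring B] [Algebra A B]
    (hg : IsIdempotentElem g) : B ⊗[A] range g ≃ₗ[B] range (g.baseChange B) := by
  have hret : (g.rangeRestrict.baseChange B) ∘ₗ ((range g).subtype.baseChange B) = .id := by
    rw [← baseChange_comp, rangeRestrict_comp_subtype_of_isIdempotentElem hg, baseChange_id]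
  have hrange : range ((range g).subtype.baseChange B) = range (g.baseChange B) := by
    have hsplit : g.baseChange B
        = (range g).subtype.baseChange B ∘ₗ g.rangeRestrict.baseChange B := by
      rw [← baseChange_comp]; rfl
    rw [hsplit, range_comp_of_range_eq_top]
    exact range_eq_top.2 (Function.RightInverse.surjective (LinearMap.congr_fun hret))
  exact (LinearEquiv.ofInjective _
    (Function.LeftInverse.injective (LinearMap.congr_fun hret))).trans (LinearEquiv.ofEq _ _ hrange)

end LinearMap

theorem Module.exists_isIdempotentElem_range_toLin'_equiv (A M : Type*) [CommSemiring A]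
    [AddCommMonoid M] [Module A M] [Module.Finite A M] [Module.Projective A M] :
    ∃ (k : ℕ) (E : Matrix (Fin k) (Fin k) A), IsIdempotentElem E ∧
      Nonempty (LinearMap.range (Matrix.toLin' E) ≃ₗ[A] M) := by
  obtain ⟨k, π, hπ⟩ := Module.Finite.exists_fin' A M
  obtain ⟨s, hs⟩ := Module.projective_lifting_property π LinearMap.id hπ
  refine ⟨k, LinearMap.toMatrix' (s ∘ₗ π), ?_, ?_⟩
  · rw [IsIdempotentElem, ← LinearMap.toMatrix'_comp, LinearMap.comp_assoc,
      ← LinearMap.comp_assoc π, hs, LinearMap.id_comp]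
  · rw [Matrix.toLin'_toMatrix',
      LinearMap.range_comp_of_range_eq_top _ (LinearMap.range_eq_top.2 hπ)]
    exact ⟨(LinearEquiv.ofInjective s
      (Function.LeftInverse.injective (LinearMap.congr_fun hs))).symm⟩

namespace Matrix

variable {ι : Type*} [Fintype ι] [DecidableEq ι]

section CommSemiring

variable {A : Type*} [CommSemiring A]

theorem isIdempotentElem_toLin' {G : Matrix ι ι A} (hG : IsIdempotentElem G) :
    IsIdempotentElem (toLin' G) := by
  rw [IsIdempotentElem, Module.End.mul_eq_comp, ← toLin'_mul, hG.eq]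

theorem piScalarRight_comp_baseChange_toLin' (B : Type*) [CommSemiring B] [Algebra A B]
    (G : Matrix ι ι A) :
    (piScalarRight A B B ι).toLinearMap ∘ₗ (toLin' G).baseChange B
      = toLin' (G.map (algebraMap A B)) ∘ₗ (piScalarRight A B B ι).toLinearMap := by
  refine TensorProduct.AlgebraTensorModule.ext fun b v => funext fun i => ?_
  simp [piScalarRight_apply, toLin'_apply, mulVec, dotProduct, Finset.mul_sum,
    Algebra.smul_def, mul_comm, mul_left_comm]

theorem nonempty_baseChange_range_toLin'_equiv (B : Type*) [CommSemiring B] [Algebra A B]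
    {G : Matrix ι ι A} (hG : IsIdempotentElem G) :
    Nonempty (B ⊗[A] LinearMap.range (toLin' G) ≃ₗ[B]
      LinearMap.range (toLin' (G.map (algebraMap A B)))) :=
  ⟨(LinearMap.baseChangeRangeEquiv B (isIdempotentElem_toLin' hG)).trans
    (LinearEquiv.rangeEquivOfSemiconj _ (piScalarRight_comp_baseChange_toLin' B G))⟩

end CommSemiring

theorem nonempty_range_toLin'_equiv_of_sub_mem {A : Type*} [CommRing A] {I : Ideal A}
    (hI : I ≤ (⊥ : Ideal A).jacobson)
    {E F : Matrix ι ι A} (hE : IsIdempotentElem E) (hF : IsIdempotentElem F)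
    (hEF : ∀ i j, F i j - E i j ∈ I) :
    Nonempty (LinearMap.range (toLin' E) ≃ₗ[A] LinearMap.range (toLin' F)) := by
  set u := F * E + (1 - F) * (1 - E)
  have hFE : (Ideal.Quotient.mk I).mapMatrix F = (Ideal.Quotient.mk I).mapMatrix E :=
    Matrix.ext fun i j => Ideal.Quotient.eq.2 (hEF i j)
  have hu : (Ideal.Quotient.mk I).mapMatrix u = 1 := by
    have hE' := hE.map (Ideal.Quotient.mk I).mapMatrix
    simp only [u, map_add, map_mul, map_sub, map_one, hFE, hE'.eq, hE'.one_sub.eq,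
      add_sub_cancel]
  have hdet : IsUnit u.det :=
    Ideal.isUnit_of_sub_one_mem_jacobson_bot _ <| hI <| Ideal.Quotient.eq.1 <| by
      rw [RingHom.map_det, hu, det_one, map_one]
  let _ := ((isUnit_iff_isUnit_det u).2 hdet).invertible
  exact ⟨LinearEquiv.rangeEquivOfSemiconj (u.toLinearEquiv' ‹_›) <| by
    rw [toLinearEquiv'_apply, ← toLin'_mul, ← toLin'_mul,
      (hE.semiconjBy_mul_add_one_sub_mul_one_sub hF).eq]⟩

end Matrix

namespace WittVector

open Function

variable {p : ℕ} [Fact p.Prime] {B : Type*} [CommRing B]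

local notation "𝕎" => WittVector p

theorem iterate_frobenius_iterate_verschiebung (x : 𝕎 B) (n : ℕ) :
    frobenius^[n] (verschiebung^[n] x) = x * (p : 𝕎 B) ^ n := by
  induction n generalizing x with
  | zero => simp
  | succ n ih =>
    rw [iterate_succ_apply' (f := verschiebung), iterate_succ_apply, frobenius_verschiebung,
      iterate_map_mul, ih, iterate_fixed (map_natCast frobenius p), pow_succ, mul_assoc]

theorem iterate_verschiebung_pow_succ (y : 𝕎 B) (k n : ℕ) :
    (verschiebung^[k] y) ^ (n + 1) = verschiebung^[k] (y ^ (n + 1) * (p : 𝕎 B) ^ (k * n)) := by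
  induction n with
  | zero => simp
  | succ n ih =>
    rw [pow_succ, ih, iterate_verschiebung_mul_left, iterate_frobenius_iterate_verschiebung]
    ring_nf

theorem teichmuller_add_verschiebung_shift (x : 𝕎 B) :
    teichmuller p (x.coeff 0) + verschiebung (x.shift 1) = x := by
  ext n
  rw [coeff_add_of_disjoint]
  · cases n with
    | zero => simp [teichmuller_coeff_zero, verschiebung_coeff_zero]
    | succ n =>
      rw [teichmuller_coeff_pos _ _ _ n.succ_pos, verschiebung_coeff_succ, shift_coeff, zero_add,
        add_comm]
  · rintro (_ | n)
    · exact Or.inr (verschiebung_coeff_zero _)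
    · exact Or.inl (teichmuller_coeff_pos _ _ _ n.succ_pos)

theorem truncate_verschiebung_eq_zero {n : ℕ} {y : 𝕎 B} (hy : truncate n y = 0) :
    truncate (n + 1) (verschiebung y) = 0 := by
  rw [← RingHom.mem_ker, mem_ker_truncate] at hy ⊢
  rintro (_ | i) hi
  · exact verschiebung_coeff_zero y
  · rw [verschiebung_coeff_succ]
    exact hy i (by omega)

theorem isNilpotent_truncate_of_isNilpotent_coeff {n : ℕ} {x : 𝕎 B}
    (hx : ∀ i < n, IsNilpotent (x.coeff i)) : IsNilpotent (truncate n x) := by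
  induction n generalizing x with
  | zero => exact ⟨1, TruncatedWittVector.ext fun i => i.elim0⟩
  | succ n ih =>
    obtain ⟨K, hK⟩ := hx 0 n.succ_pos
    obtain ⟨L, hL⟩ := ih (x := x.shift 1) fun i hi => by
      rw [shift_coeff]; exact hx (1 + i) (by omega)
    have hT : IsNilpotent (teichmuller p (x.coeff 0)) :=
      ⟨K, by rw [← map_pow, hK, teichmuller_zero]⟩
    have hV : IsNilpotent (truncate (n + 1) (verschiebung (x.shift 1))) := by
      refine ⟨L + 1, ?_⟩
      rw [← map_pow, ← iterate_one verschiebung, iterate_verschiebung_pow_succ, iterate_one]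
      apply truncate_verschiebung_eq_zero
      rw [map_mul, map_pow, pow_succ, hL, zero_mul, zero_mul]
    rw [← teichmuller_add_verschiebung_shift x, map_add]
    exact (Commute.all _ _).isNilpotent_add (hT.map _) hV

theorem isNilpotent_truncate_succ_of_coeff_eq_zero (hp : IsNilpotent (p : B)) {n : ℕ}
    (hn : 0 < n) {x : 𝕎 B} (hx : ∀ i < n, x.coeff i = 0) :
    IsNilpotent (truncate (n + 1) x) := by
  obtain ⟨N, hN⟩ := hp
  refine ⟨N + 1, ?_⟩
  rw [← map_pow, eq_iterate_verschiebung hx, iterate_verschiebung_pow_succ, ← RingHom.mem_ker,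
    mem_ker_truncate]
  intro i hi
  rcases Nat.lt_or_ge i n with hin | hin
  · exact iterate_verschiebung_coeff_eq_zero _ hin
  · obtain rfl : i = n := by omega
    have hpow : (p : B) ^ (i * N) = 0 := pow_eq_zero_of_le (Nat.le_mul_of_pos_left N hn) hN
    have := iterate_verschiebung_coeff (x.shift i ^ (N + 1) * (p : 𝕎 B) ^ (i * N)) i 0
    rw [zero_add] at this
    rw [this, ← constantCoeff_apply, map_mul, map_pow, map_pow, map_natCast, hpow, mul_zero]

section Tower

variable (p) {R : Type*} [CommRing R] (I : Ideal R)

noncomputable def truncModPow (n : ℕ) :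
    𝕎 R →+* TruncatedWittVector p (n + 1) (R ⧸ I ^ (n + 1)) :=
  (truncate (n + 1)).comp (map (Ideal.Quotient.mk _))

variable {p I}

theorem truncModPow_eq_iff {n : ℕ} {x y : 𝕎 R} :
    truncModPow p I n x = truncModPow p I n y ↔
      ∀ i ≤ n, x.coeff i - y.coeff i ∈ I ^ (n + 1) := by
  simp only [truncModPow, RingHom.comp_apply, TruncatedWittVector.ext_iff, coeff_truncate,
    map_coeff, Ideal.Quotient.eq, Fin.forall_iff, Nat.lt_succ_iff]

theorem truncModPow_eq_zero_iff {n : ℕ} {x : 𝕎 R} :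
    truncModPow p I n x = 0 ↔ ∀ i ≤ n, x.coeff i ∈ I ^ (n + 1) := by
  simpa using truncModPow_eq_iff (x := x) (y := 0)

theorem truncModPow_eq_of_le {m n : ℕ} (hmn : m ≤ n) {x y : 𝕎 R}
    (h : truncModPow p I n x = truncModPow p I n y) : truncModPow p I m x = truncModPow p I m y :=
  truncModPow_eq_iff.2 fun i hi =>
    Ideal.pow_le_pow_right (by omega) (truncModPow_eq_iff.1 h i (by omega))

theorem eq_zero_of_forall_truncModPow_eq_zero [IsHausdorff I R] {x : 𝕎 R}
    (h : ∀ n, truncModPow p I n x = 0) : x = 0 := by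
  ext i
  rw [zero_coeff]
  refine IsHausdorff.haus ‹_› _ fun n => ?_
  rw [Ideal.smul_eq_mul, Ideal.mul_top, SModEq.zero]
  exact Ideal.pow_le_pow_right (by omega) (truncModPow_eq_zero_iff.1 (h (max n i)) i (by omega))

theorem exists_forall_truncModPow_eq [IsPrecomplete I R] (a : ℕ → 𝕎 R)
    (ha : ∀ n, truncModPow p I n (a (n + 1)) = truncModPow p I n (a n)) :
    ∃ b, ∀ n, truncModPow p I n b = truncModPow p I n (a n) := by
  have compat : ∀ m n, m ≤ n → truncModPow p I m (a n) = truncModPow p I m (a m) := by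
    intro m n hmn
    induction n, hmn using Nat.le_induction with
    | base => rfl
    | succ n hmn ih => rw [← ih, truncModPow_eq_of_le hmn (ha n)]
  have hcoeff : ∀ i, ∃ L : R, ∀ n, (a (n + i)).coeff i - L ∈ I ^ n := by
    intro i
    obtain ⟨L, hL⟩ := IsPrecomplete.prec ‹_› (f := fun n => (a (n + i)).coeff i)
      fun {m n} hmn => by
        rw [Ideal.smul_eq_mul, Ideal.mul_top, SModEq.sub_mem, ← neg_mem_iff, neg_sub]
        exact Ideal.pow_le_pow_right (by omega)
          (truncModPow_eq_iff.1 (compat (m + i) (n + i) (by omega)) i (by omega))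
    refine ⟨L, fun n => ?_⟩
    simpa [Ideal.smul_eq_mul, Ideal.mul_top, SModEq.sub_mem] using hL n
  choose L hL using hcoeff
  refine ⟨mk p L, fun n => truncModPow_eq_iff.2 fun i hi => ?_⟩
  have h₁ := truncModPow_eq_iff.1 (compat n (n + 1 + i) (by omega)) i hi
  have h₂ := hL i (n + 1)
  rw [coeff_mk]
  convert sub_mem h₁ h₂ using 1
  ring

theorem isNilpotent_truncModPow_succ (hpI : (p : R) ∈ I) {n : ℕ} {x : 𝕎 R}
    (hx : truncModPow p I n x = 0) : IsNilpotent (truncModPow p I (n + 1) x) := by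
  -- The coefficients `x₀, …, xₙ` lie in `I ^ (n + 1)`, so they square to zero modulo
  -- `I ^ (n + 2)`; a power of `x` kills them, and what is left is a `Vⁿ⁺¹`-multiple,
  -- nilpotent in `W_{n+2}` because `p` is nilpotent modulo `I ^ (n + 2)`.
  set y := map (Ideal.Quotient.mk (I ^ (n + 2))) x
  have hy : ∀ i < n + 1, IsNilpotent (y.coeff i) := fun i hi => by
    refine ⟨2, ?_⟩
    rw [map_coeff, ← map_pow, Ideal.Quotient.eq_zero_iff_mem]
    have := Ideal.pow_mem_pow (truncModPow_eq_zero_iff.1 hx i (by omega)) 2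
    rw [← pow_mul] at this
    exact Ideal.pow_le_pow_right (by omega) this
  obtain ⟨K, hK⟩ := isNilpotent_truncate_of_isNilpotent_coeff hy
  have hp : IsNilpotent (p : R ⧸ I ^ (n + 2)) := by
    refine ⟨n + 2, ?_⟩
    rw [← map_natCast (Ideal.Quotient.mk _), ← map_pow, Ideal.Quotient.eq_zero_iff_mem]
    exact Ideal.pow_mem_pow hpI _
  have hyK := isNilpotent_truncate_succ_of_coeff_eq_zero hp n.succ_pos (x := y ^ K) fun i hi => by
    rw [← map_pow, ← RingHom.mem_ker, mem_ker_truncate] at hK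
    exact hK i hi
  rw [map_pow] at hyK
  exact hyK.of_pow (x := truncate (n + 2) y)

theorem truncModPow_zero_eq_iff {x y : 𝕎 R} :
    truncModPow p I 0 x = truncModPow p I 0 y ↔ x.coeff 0 - y.coeff 0 ∈ I := by
  simp [truncModPow_eq_iff]

section Matrix

variable {ι : Type*} [Fintype ι] [DecidableEq ι]

theorem isNilpotent_mapMatrix_truncModPow_succ (hpI : (p : R) ∈ I) {n : ℕ}
    {X : Matrix ι ι (𝕎 R)} (hX : (truncModPow p I n).mapMatrix X = 0) :
    IsNilpotent ((truncModPow p I (n + 1)).mapMatrix X) :=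
  Matrix.isNilpotent_of_forall_isNilpotent fun i j =>
    isNilpotent_truncModPow_succ hpI (by simpa using congr_fun₂ hX i j)

theorem eq_zero_of_forall_mapMatrix_truncModPow_eq_zero [IsHausdorff I R]
    {X : Matrix ι ι (𝕎 R)} (hX : ∀ n, (truncModPow p I n).mapMatrix X = 0) : X = 0 :=
  Matrix.ext fun i j =>
    eq_zero_of_forall_truncModPow_eq_zero fun n => by simpa using congr_fun₂ (hX n) i j

theorem exists_forall_mapMatrix_truncModPow_eq [IsPrecomplete I R]
    (a : ℕ → Matrix ι ι (𝕎 R))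
    (ha : ∀ n, (truncModPow p I n).mapMatrix (a (n + 1)) = (truncModPow p I n).mapMatrix (a n)) :
    ∃ b, ∀ n, (truncModPow p I n).mapMatrix b = (truncModPow p I n).mapMatrix (a n) := by
  choose b hb using fun i j => exists_forall_truncModPow_eq (fun n => a n i j)
    fun n => by simpa using congr_fun₂ (ha n) i j
  exact ⟨Matrix.of b, fun n => Matrix.ext fun i j => by simpa using hb i j n⟩

theorem exists_isIdempotentElem_matrix_coeff_zero_sub_mem [IsAdicComplete I R]
    (hpI : (p : R) ∈ I) {E : Matrix ι ι R} (hE : IsIdempotentElem E) :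
    ∃ F : Matrix ι ι (𝕎 R), IsIdempotentElem F ∧
      ∀ i j, (F i j).coeff 0 - E i j ∈ I := by
  set e := E.map (teichmuller p)
  have he : e.map constantCoeff = E := Matrix.ext fun i j => teichmuller_coeff_zero p (E i j)
  have he_idem : IsIdempotentElem ((truncModPow p I 0).mapMatrix e) := by
    have hee : (e * e).map constantCoeff = e.map constantCoeff := by
      rw [Matrix.map_mul, he, hE.eq]
    rw [IsIdempotentElem, ← map_mul]
    refine Matrix.ext fun i j => truncModPow_zero_eq_iff.2 ?_
    rw [show ((e * e) i j).coeff 0 = (e i j).coeff 0 from congr_fun₂ hee i j, sub_self]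
    exact zero_mem I
  obtain ⟨F, hF, hFe⟩ := exists_isIdempotentElem_of_tower
    (fun n => (truncModPow p I n).mapMatrix (m := ι))
    (fun _ _ => isNilpotent_mapMatrix_truncModPow_succ hpI)
    (fun _ => eq_zero_of_forall_mapMatrix_truncModPow_eq_zero)
    exists_forall_mapMatrix_truncModPow_eq he_idem
  refine ⟨F, hF, fun i j => ?_⟩
  rw [← congr_fun₂ he i j]
  exact truncModPow_zero_eq_iff.1 (by simpa using congr_fun₂ hFe i j)

end Matrix

end Tower

end WittVector

/-- **Statement 10.** Let `p` be a prime and `R` a commutative ring that is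
`p`-adically complete and separated.  Then every finite projective `R`-module lifts
to the `p`-typical Witt vectors: for every finitely generated projective `R`-module
`M` there is a finitely generated projective `W(R)`-module `N` together with an
isomorphism of `R`-modules `N ⊗_{W(R),w₀} R ≅ M`, where `w₀ : W(R) → R` is the zeroth
coefficient projection (it makes `R` a `W(R)`-algebra). -/
theorem finiteProjective_lifts_to_wittVectors
    (p : ℕ) [Fact p.Prime]
    (R : Type u) [CommRing R]
    [IsAdicComplete (Ideal.span {(p : R)}) R]
    [Algebra (WittVector p R) R]
    (halg : ∀ x : WittVector p R, algebraMap (WittVector p R) R x = x.coeff 0)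
    (M : Type u) [AddCommGroup M] [Module R M]
    [Module.Finite R M] [Module.Projective R M] :
    ∃ N : ModuleCat.{u} (WittVector p R),
      Module.Finite (WittVector p R) N ∧
      Module.Projective (WittVector p R) N ∧
      Nonempty ((R ⊗[WittVector p R] N) ≃ₗ[R] M) := by
  obtain ⟨k, E, hE, ⟨eM⟩⟩ := Module.exists_isIdempotentElem_range_toLin'_equiv R M
  obtain ⟨F, hF, hFE⟩ := WittVector.exists_isIdempotentElem_matrix_coeff_zero_sub_mem
    (Ideal.mem_span_singleton_self (p : R)) hE
  obtain ⟨eBase⟩ := Matrix.nonempty_baseChange_range_toLin'_equiv R hF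
  obtain ⟨eConj⟩ := Matrix.nonempty_range_toLin'_equiv_of_sub_mem
    (IsAdicComplete.le_jacobson_bot _) hE (hF.map (algebraMap _ R).mapMatrix)
    fun i j => by simpa [halg] using hFE i j
  exact ⟨.of _ (LinearMap.range (Matrix.toLin' F)), inferInstance,
    LinearMap.projective_range_of_isIdempotentElem (Matrix.isIdempotentElem_toLin' hF),
    ⟨eBase.trans (eConj.symm.trans eM)⟩⟩
end

section
/- Let p be a prime, m ≥ 1 an integer, and B → B' a faithfully flat ring homomorphism of commutative rings; set B'' = B' ⊗_B B'. Then the sequence 0 → W_m(B) → W_m(B') ⇉ W_m(B'') of m-truncated p-typical Witt vector rings is exact: the map W_m(B) → W_m(B') is injective and its image equals the equalizer of the two ring homomorphisms W_m(B') → W_m(B'') induced by b' ↦ b'⊗1 and b' ↦ 1⊗b'. -/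
open TensorProduct

lemma amitsur_aux (B B' : Type*) [CommRing B] [CommRing B'] [Algebra B B']
    [Module.FaithfullyFlat B B'] :
    Function.Injective (algebraMap B B') ∧
    ∀ b' : B', b' ⊗ₜ[B] (1 : B') = 1 ⊗ₜ[B] b' → ∃ b, algebraMap B B' b = b' := by
  set f : B →ₗ[B] B' := Algebra.linearMap B B' with hf
  set g : B' →ₗ[B] B' ⊗[B] B' :=
    (TensorProduct.mk B B' B').flip 1 - TensorProduct.mk B B' B' 1 with hg
  -- injectivity
  have hinj : Function.Injective (algebraMap B B') := by
    set K := LinearMap.ker f with hK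
    have hsub : Subsingleton (K ⊗[B] B') := by
      refine subsingleton_iff_forall_eq 0 |>.2 fun x => ?_
      refine Module.Flat.rTensor_preserves_injective_linearMap (M := B') K.subtype
        (Submodule.injective_subtype K) ?_
      rw [map_zero]
      apply (TensorProduct.lid B B').injective
      rw [map_zero]
      induction x using TensorProduct.induction_on with
      | zero => simp
      | tmul k b' =>
        rcases k with ⟨k, hk⟩
        have : algebraMap B B' k = 0 := hk
        simp [Algebra.smul_def, this]
      | add x y hx hy => simp [map_add, hx, hy]
    have : Subsingleton K := Module.FaithfullyFlat.rTensor_reflects_triviality B B' K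
    rw [injective_iff_map_eq_zero]
    intro b hb
    have hbk : b ∈ K := hb
    have := Subsingleton.elim (⟨b, hbk⟩ : K) 0
    simpa using congrArg Subtype.val this
  -- exactness after base change
  have hex' : Function.Exact (f.rTensor B') (g.rTensor B') := by
    intro t
    constructor
    · intro h0
      -- contraction map k
      set k : (B' ⊗[B] B') ⊗[B] B' →ₗ[B] B' ⊗[B] B' :=
        (LinearMap.mul' B B').lTensor B' ∘ₗ (TensorProduct.assoc B B' B' B').toLinearMap with hk
      set L : B' ⊗[B] B' →ₗ[B] B' ⊗[B] B' :=
        TensorProduct.mk B B' B' 1 ∘ₗ LinearMap.mul' B B' with hL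
      have key : (LinearMap.id : B' ⊗[B] B' →ₗ[B] _) = k ∘ₗ g.rTensor B' + L := by
        apply TensorProduct.ext'
        intro x y
        simp only [hk, hL, hg, LinearMap.id_apply, LinearMap.add_apply, LinearMap.comp_apply,
          LinearMap.rTensor_tmul, LinearMap.sub_apply, TensorProduct.mk_apply,
          LinearMap.flip_apply, TensorProduct.sub_tmul, map_sub, LinearEquiv.coe_coe,
          TensorProduct.assoc_tmul, LinearMap.lTensor_tmul, LinearMap.mul'_apply, one_mul,
          mul_one]
        rw [mul_comm]
        abel
      have := congrArg (fun F => F t) key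
      simp only [LinearMap.id_apply, LinearMap.add_apply, LinearMap.comp_apply, h0, map_zero,
        zero_add] at this
      refine ⟨(1 : B) ⊗ₜ[B] LinearMap.mul' B B' t, ?_⟩
      rw [this]
      simp [hL, hf]
    · rintro ⟨x, rfl⟩
      have hcomp : g ∘ₗ f = 0 := by
        ext b
        simp [hg, hf, Algebra.algebraMap_eq_smul_one, TensorProduct.smul_tmul]
      rw [← LinearMap.comp_apply, ← LinearMap.rTensor_comp, hcomp]
      simp
  have hex : Function.Exact f g :=
    Module.FaithfullyFlat.rTensor_reflects_exact B B' f g hex'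
  refine ⟨hinj, fun b' hb' => ?_⟩
  have : g b' = 0 := by
    simp [hg, hb']
  exact (hex b').1 this

/-- **Statement 13.** Let `p` be a prime, `m ≥ 1`, and `B → B'` a faithfully flat ring
homomorphism of commutative rings; set `B'' = B' ⊗_B B'`.  Then the sequence
`0 → W_m(B) → W_m(B') ⇉ W_m(B'')` of `m`-truncated `p`-typical Witt vector rings is
exact: the map `W_m(B) → W_m(B')` is injective, and its image is the equalizer of the
two ring homomorphisms `W_m(B') → W_m(B'')` induced by `b' ↦ b' ⊗ 1` and
`b' ↦ 1 ⊗ b'`.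

The functorial maps on truncated Witt vectors are characterized by acting on each
coefficient by the given ring homomorphism. -/
theorem truncatedWittVector_equalizer_of_faithfullyFlat
    (p m : ℕ) [Fact p.Prime] (hm : 1 ≤ m)
    (B B' : Type*) [CommRing B] [CommRing B'] [Algebra B B']
    [Module.FaithfullyFlat B B']
    -- `W_m` applied to `B → B'`:
    (Wι : TruncatedWittVector p m B →+* TruncatedWittVector p m B')
    (hWι : ∀ (x : TruncatedWittVector p m B) (i : Fin m),
      (Wι x).coeff i = algebraMap B B' (x.coeff i))
    -- `W_m` applied to the two inclusions `B' → B'' = B' ⊗[B] B'`: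
    (Wp₁ Wp₂ : TruncatedWittVector p m B' →+* TruncatedWittVector p m (B' ⊗[B] B'))
    (hWp₁ : ∀ (y : TruncatedWittVector p m B') (i : Fin m),
      (Wp₁ y).coeff i = y.coeff i ⊗ₜ[B] 1)
    (hWp₂ : ∀ (y : TruncatedWittVector p m B') (i : Fin m),
      (Wp₂ y).coeff i = 1 ⊗ₜ[B] y.coeff i) :
    Function.Injective Wι ∧
    (∀ y : TruncatedWittVector p m B', (Wp₁ y = Wp₂ y ↔ ∃ x, Wι x = y)) := by
  obtain ⟨hinj, heq⟩ := amitsur_aux B B'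
  constructor
  · intro x x' h
    apply TruncatedWittVector.ext
    intro i
    apply hinj
    rw [← hWι, ← hWι, h]
  · intro y
    constructor
    · intro h
      have hco : ∀ i : Fin m, ∃ b, algebraMap B B' b = y.coeff i := by
        intro i
        apply heq
        have := congrArg (fun z => TruncatedWittVector.coeff i z) h
        simpa [hWp₁, hWp₂] using this
      choose b hb using hco
      refine ⟨TruncatedWittVector.mk p b, ?_⟩
      apply TruncatedWittVector.ext
      intro i
      rw [hWι, TruncatedWittVector.coeff_mk, hb]
    · rintro ⟨x, rfl⟩
      apply TruncatedWittVector.ext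
      intro i
      rw [hWp₁, hWp₂, hWι, Algebra.algebraMap_eq_smul_one, TensorProduct.smul_tmul,
        TensorProduct.tmul_smul]
end
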